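/- arXiv:math/0506185 — 6 statements merged into one kernel-verified Lean document; each statement's English description precedes it below -/
import Mathlib

section
/- Let 𝔖 be an interval system on a set X, let N be an initial segment of ℕ, and let (A_n)_{n∈N} be a family of members of 𝔖. Then there exists a countable family 𝔇 ⊆ 𝔖 of pairwise disjoint sets such that ⋃𝔇 = ⋃_{n∈N} A_n and, for every n ∈ N, the set A_n \ ⋃_{m<n} A_m is the union of a subfamily of 𝔇. Moreover, for any prescribed finite family 𝔈 ⊆ 𝔖, the family 𝔇 can be chosen so that for every D ∈ 𝔇 and E ∈ 𝔈 either D ⊆ E or D ∩ E = ∅. -/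
/-- A family `S` of subsets of `X` is an *interval system* if for all `A, B ∈ S` there exist
countable pairwise disjoint families `D₁, D₂ ⊆ S` with `⋃₀ D₁ = A \ B` and `⋃₀ D₂ = A ∩ B`. -/
def IsIntervalSystem {X : Type*} (S : Set (Set X)) : Prop :=
  ∀ A ∈ S, ∀ B ∈ S,
    (∃ D : Set (Set X), D ⊆ S ∧ D.Countable ∧ D.PairwiseDisjoint id ∧ ⋃₀ D = A \ B) ∧
    (∃ D : Set (Set X), D ⊆ S ∧ D.Countable ∧ D.PairwiseDisjoint id ∧ ⋃₀ D = A ∩ B)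

/-- Refining a countable disjoint family against a single set `B ∈ S`. -/
lemma refine_one {X : Type*} {S : Set (Set X)} (hS : IsIntervalSystem S)
    {D : Set (Set X)} (hDS : D ⊆ S) (hDc : D.Countable) (hDd : D.PairwiseDisjoint id)
    {B : Set X} (hB : B ∈ S) :
    ∃ D' : Set (Set X), D' ⊆ S ∧ D'.Countable ∧ D'.PairwiseDisjoint id ∧
      ⋃₀ D' = ⋃₀ D ∧ (∀ d' ∈ D', ∃ d ∈ D, d' ⊆ d) ∧
      (∀ d' ∈ D', d' ⊆ B ∨ Disjoint d' B) := by
  classical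
  have H1 : ∀ d : Set X, ∃ D1 : Set (Set X), d ∈ D →
      (D1 ⊆ S ∧ D1.Countable ∧ D1.PairwiseDisjoint id ∧ ⋃₀ D1 = d \ B) := by
    intro d
    by_cases hd : d ∈ D
    · obtain ⟨D1, h⟩ := (hS d (hDS hd) B hB).1
      exact ⟨D1, fun _ => h⟩
    · exact ⟨∅, fun h => absurd h hd⟩
  have H2 : ∀ d : Set X, ∃ D2 : Set (Set X), d ∈ D →
      (D2 ⊆ S ∧ D2.Countable ∧ D2.PairwiseDisjoint id ∧ ⋃₀ D2 = d ∩ B) := by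
    intro d
    by_cases hd : d ∈ D
    · obtain ⟨D2, h⟩ := (hS d (hDS hd) B hB).2
      exact ⟨D2, fun _ => h⟩
    · exact ⟨∅, fun h => absurd h hd⟩
  choose D₁ hD₁ using H1
  choose D₂ hD₂ using H2
  refine ⟨⋃ d ∈ D, (D₁ d ∪ D₂ d), ?_, ?_, ?_, ?_, ?_, ?_⟩
  · intro s hs
    simp only [Set.mem_iUnion] at hs
    obtain ⟨d, hd, hs⟩ := hs
    rcases hs with h | h
    · exact (hD₁ d hd).1 h
    · exact (hD₂ d hd).1 h
  · exact hDc.biUnion (fun d hd => ((hD₁ d hd).2.1).union ((hD₂ d hd).2.1))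
  · -- pairwise disjoint
    intro s hs t ht hst
    simp only [Set.mem_iUnion] at hs ht
    obtain ⟨d, hd, hs⟩ := hs
    obtain ⟨d', hd', ht⟩ := ht
    have hsub1 : ∀ u, u ∈ D₁ d ∪ D₂ d → u ⊆ d := by
      intro u hu
      rcases hu with hu | hu
      · exact ((hD₁ d hd).2.2.2 ▸ Set.subset_sUnion_of_mem hu).trans Set.diff_subset
      · exact ((hD₂ d hd).2.2.2 ▸ Set.subset_sUnion_of_mem hu).trans Set.inter_subset_left
    have hsub1' : ∀ u, u ∈ D₁ d' ∪ D₂ d' → u ⊆ d' := by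
      intro u hu
      rcases hu with hu | hu
      · exact ((hD₁ d' hd').2.2.2 ▸ Set.subset_sUnion_of_mem hu).trans Set.diff_subset
      · exact ((hD₂ d' hd').2.2.2 ▸ Set.subset_sUnion_of_mem hu).trans Set.inter_subset_left
    by_cases hdd : d = d'
    · subst hdd
      rcases hs with hs | hs <;> rcases ht with ht | ht
      · exact (hD₁ d hd).2.2.1 hs ht hst
      · -- s ⊆ d \ B, t ⊆ d ∩ B
        have h1 : s ⊆ d \ B := (hD₁ d hd).2.2.2 ▸ Set.subset_sUnion_of_mem hs
        have h2 : t ⊆ d ∩ B := (hD₂ d hd).2.2.2 ▸ Set.subset_sUnion_of_mem ht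
        simp only [Function.onFun, id]
        rw [Set.disjoint_left]
        intro x hx1 hx2
        exact (h1 hx1).2 (h2 hx2).2
      · have h1 : s ⊆ d ∩ B := (hD₂ d hd).2.2.2 ▸ Set.subset_sUnion_of_mem hs
        have h2 : t ⊆ d \ B := (hD₁ d hd).2.2.2 ▸ Set.subset_sUnion_of_mem ht
        simp only [Function.onFun, id]
        rw [Set.disjoint_left]
        intro x hx1 hx2
        exact (h2 hx2).2 (h1 hx1).2
      · exact (hD₂ d hd).2.2.1 hs ht hst
    · have hdisj := hDd hd hd' hdd
      simp only [Function.onFun, id] at hdisj ⊢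
      exact hdisj.mono (hsub1 s hs) (hsub1' t ht)
  · -- union
    apply Set.eq_of_subset_of_subset
    · intro x hx
      obtain ⟨s, hs, hxs⟩ := hx
      simp only [Set.mem_iUnion] at hs
      obtain ⟨d, hd, hs⟩ := hs
      refine ⟨d, hd, ?_⟩
      rcases hs with hs | hs
      · exact (((hD₁ d hd).2.2.2 ▸ Set.subset_sUnion_of_mem hs) hxs).1
      · exact (((hD₂ d hd).2.2.2 ▸ Set.subset_sUnion_of_mem hs) hxs).1
    · intro x hx
      obtain ⟨d, hd, hxd⟩ := hx
      by_cases hxB : x ∈ B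
      · have : x ∈ ⋃₀ D₂ d := (hD₂ d hd).2.2.2 ▸ ⟨hxd, hxB⟩
        obtain ⟨s, hs, hxs⟩ := this
        exact ⟨s, Set.mem_iUnion.2 ⟨d, Set.mem_iUnion.2 ⟨hd, Or.inr hs⟩⟩, hxs⟩
      · have : x ∈ ⋃₀ D₁ d := (hD₁ d hd).2.2.2 ▸ ⟨hxd, hxB⟩
        obtain ⟨s, hs, hxs⟩ := this
        exact ⟨s, Set.mem_iUnion.2 ⟨d, Set.mem_iUnion.2 ⟨hd, Or.inl hs⟩⟩, hxs⟩
  · intro s hs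
    simp only [Set.mem_iUnion] at hs
    obtain ⟨d, hd, hs⟩ := hs
    refine ⟨d, hd, ?_⟩
    rcases hs with hs | hs
    · exact ((hD₁ d hd).2.2.2 ▸ Set.subset_sUnion_of_mem hs).trans Set.diff_subset
    · exact ((hD₂ d hd).2.2.2 ▸ Set.subset_sUnion_of_mem hs).trans Set.inter_subset_left
  · intro s hs
    simp only [Set.mem_iUnion] at hs
    obtain ⟨d, hd, hs⟩ := hs
    rcases hs with hs | hs
    · right
      have h1 : s ⊆ d \ B := (hD₁ d hd).2.2.2 ▸ Set.subset_sUnion_of_mem hs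
      rw [Set.disjoint_left]
      intro x hx1 hx2
      exact (h1 hx1).2 hx2
    · left
      exact ((hD₂ d hd).2.2.2 ▸ Set.subset_sUnion_of_mem hs).trans Set.inter_subset_right

/-- Refining a countable disjoint family against a finite family `G ⊆ S`. -/
lemma refine_finset {X : Type*} {S : Set (Set X)} (hS : IsIntervalSystem S) :
    ∀ G : Finset (Set X), (∀ e ∈ G, e ∈ S) →
    ∀ D : Set (Set X), D ⊆ S → D.Countable → D.PairwiseDisjoint id →
    ∃ D' : Set (Set X), D' ⊆ S ∧ D'.Countable ∧ D'.PairwiseDisjoint id ∧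
      ⋃₀ D' = ⋃₀ D ∧ (∀ d' ∈ D', ∃ d ∈ D, d' ⊆ d) ∧
      (∀ d' ∈ D', ∀ e ∈ G, d' ⊆ e ∨ Disjoint d' e) := by
  classical
  intro G
  induction G using Finset.induction_on with
  | empty =>
    intro _ D hDS hDc hDd
    exact ⟨D, hDS, hDc, hDd, rfl, fun d hd => ⟨d, hd, le_refl _⟩,
      fun d _ e he => absurd he (Finset.notMem_empty e)⟩
  | insert B G hB ih =>
    intro hG D hDS hDc hDd
    have hBS : B ∈ S := hG B (Finset.mem_insert_self B G)
    have hGS : ∀ e ∈ G, e ∈ S := fun e he => hG e (Finset.mem_insert_of_mem he)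
    obtain ⟨D₁, h₁S, h₁c, h₁d, h₁U, h₁sub, h₁ref⟩ := ih hGS D hDS hDc hDd
    obtain ⟨D₂, h₂S, h₂c, h₂d, h₂U, h₂sub, h₂ref⟩ := refine_one hS h₁S h₁c h₁d hBS
    refine ⟨D₂, h₂S, h₂c, h₂d, h₂U.trans h₁U, ?_, ?_⟩
    · intro d' hd'
      obtain ⟨d₁, hd₁, hsub⟩ := h₂sub d' hd'
      obtain ⟨d, hd, hsub'⟩ := h₁sub d₁ hd₁
      exact ⟨d, hd, hsub.trans hsub'⟩
    · intro d' hd' e he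
      rcases Finset.mem_insert.1 he with rfl | he
      · exact h₂ref d' hd'
      · obtain ⟨d₁, hd₁, hsub⟩ := h₂sub d' hd'
        rcases h₁ref d₁ hd₁ e he with h | h
        · exact Or.inl (hsub.trans h)
        · exact Or.inr (h.mono_left hsub)

/-- Decomposing `A \ ⋃₀ F` into a countable disjoint subfamily of `S`,
refined against a finite family `G`. -/
lemma decompose {X : Type*} {S : Set (Set X)} (hS : IsIntervalSystem S)
    {A : Set X} (hA : A ∈ S) :
    ∀ F : Finset (Set X), (∀ f ∈ F, f ∈ S) →
    ∀ G : Finset (Set X), (∀ e ∈ G, e ∈ S) →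
    ∃ D : Set (Set X), D ⊆ S ∧ D.Countable ∧ D.PairwiseDisjoint id ∧
      ⋃₀ D = A \ ⋃₀ ↑F ∧ (∀ d ∈ D, ∀ e ∈ G, d ⊆ e ∨ Disjoint d e) := by
  classical
  intro F
  induction F using Finset.induction_on with
  | empty =>
    intro _ G hG
    obtain ⟨D, hDS, hDc, hDd, hDU, _, hDref⟩ := refine_finset hS G hG {A}
      (Set.singleton_subset_iff.2 hA) (Set.countable_singleton A)
      (Set.pairwiseDisjoint_singleton A id)
    refine ⟨D, hDS, hDc, hDd, ?_, hDref⟩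
    rw [hDU]
    simp
  | insert B F hB ih =>
    intro hF G hG
    have hBS : B ∈ S := hF B (Finset.mem_insert_self B F)
    have hFS : ∀ f ∈ F, f ∈ S := fun f hf => hF f (Finset.mem_insert_of_mem hf)
    have hG' : ∀ e ∈ insert B G, e ∈ S := by
      intro e he
      rcases Finset.mem_insert.1 he with rfl | he
      · exact hBS
      · exact hG e he
    obtain ⟨D₁, h₁S, h₁c, h₁d, h₁U, h₁ref⟩ := ih hFS (insert B G) hG'
    refine ⟨{d ∈ D₁ | Disjoint d B}, fun d hd => h₁S hd.1,
      h₁c.mono (Set.sep_subset _ _), h₁d.subset (Set.sep_subset _ _), ?_, ?_⟩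
    · apply Set.eq_of_subset_of_subset
      · rintro x ⟨s, ⟨hs, hsB⟩, hxs⟩
        have hx1 : x ∈ A \ ⋃₀ ↑F := h₁U ▸ ⟨s, hs, hxs⟩
        refine ⟨hx1.1, ?_⟩
        rw [Finset.coe_insert, Set.sUnion_insert]
        rintro (hxB | hxF)
        · exact (Set.disjoint_left.1 hsB) hxs hxB
        · exact hx1.2 hxF
      · intro x hx
        rw [Finset.coe_insert, Set.sUnion_insert] at hx
        have hxB : x ∉ B := fun h => hx.2 (Or.inl h)
        have hx1 : x ∈ ⋃₀ D₁ := h₁U ▸ ⟨hx.1, fun h => hx.2 (Or.inr h)⟩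
        obtain ⟨s, hs, hxs⟩ := hx1
        rcases h₁ref s hs B (Finset.mem_insert_self B G) with h | h
        · exact absurd (h hxs) hxB
        · exact ⟨s, ⟨hs, h⟩, hxs⟩
    · intro d hd e he
      exact h₁ref d hd.1 e (Finset.mem_insert_of_mem he)

/-- Let `S` be an interval system on `X`, `N` an initial segment of `ℕ`, and
`(A n)_{n ∈ N}` a family of members of `S`. Then there is a countable pairwise disjoint family
`D ⊆ S` with `⋃₀ D = ⋃_{n ∈ N} A n` such that for every `n ∈ N` the set `A n \ ⋃_{m < n} A m`
is the union of a subfamily of `D`; moreover, for any prescribed finite `E ⊆ S`, `D` can be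
chosen so that every `d ∈ D` and `e ∈ E` satisfy `d ⊆ e` or `d ∩ e = ∅`. -/
theorem statement0 {X : Type*} (S : Set (Set X)) (hS : IsIntervalSystem S)
    (N : Set ℕ) (hN : ∀ m n : ℕ, m ≤ n → n ∈ N → m ∈ N)
    (A : ℕ → Set X) (hA : ∀ n ∈ N, A n ∈ S)
    (E : Finset (Set X)) (hE : ∀ e ∈ E, e ∈ S) :
    ∃ D : Set (Set X), D ⊆ S ∧ D.Countable ∧ D.PairwiseDisjoint id ∧
      ⋃₀ D = (⋃ n ∈ N, A n) ∧
      (∀ n ∈ N, ∃ D' ⊆ D, ⋃₀ D' = A n \ ⋃ (m : ℕ) (_ : m < n), A m) ∧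
      (∀ d ∈ D, ∀ e ∈ E, d ⊆ e ∨ Disjoint d e) := by
  classical
  have hFU : ∀ n : ℕ, ⋃₀ ↑((Finset.range n).image A) = ⋃ (m : ℕ) (_ : m < n), A m := by
    intro n
    ext x
    simp [Finset.mem_image, Finset.mem_range, Set.mem_iUnion]
  have H : ∀ n : ℕ, ∃ Dn : Set (Set X), n ∈ N →
      (Dn ⊆ S ∧ Dn.Countable ∧ Dn.PairwiseDisjoint id ∧
        ⋃₀ Dn = A n \ ⋃ (m : ℕ) (_ : m < n), A m ∧
        ∀ d ∈ Dn, ∀ e ∈ E, d ⊆ e ∨ Disjoint d e) := by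
    intro n
    by_cases hn : n ∈ N
    · have hF : ∀ f ∈ (Finset.range n).image A, f ∈ S := by
        intro f hf
        obtain ⟨m, hm, rfl⟩ := Finset.mem_image.1 hf
        exact hA m (hN m n (le_of_lt (Finset.mem_range.1 hm)) hn)
      obtain ⟨Dn, h1, h2, h3, h4, h5⟩ := decompose hS (hA n hn) ((Finset.range n).image A) hF E hE
      exact ⟨Dn, fun _ => ⟨h1, h2, h3, (hFU n) ▸ h4, h5⟩⟩
    · exact ⟨∅, fun h => absurd h hn⟩
  choose Dn hDn using H
  have hsubG : ∀ n (hn : n ∈ N), ∀ d ∈ Dn n, d ⊆ A n \ ⋃ (m : ℕ) (_ : m < n), A m := by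
    intro n hn d hd
    exact (hDn n hn).2.2.2.1 ▸ Set.subset_sUnion_of_mem hd
  have hGdisj : ∀ m n : ℕ, m < n →
      Disjoint (A m \ ⋃ (k : ℕ) (_ : k < m), A k) (A n \ ⋃ (k : ℕ) (_ : k < n), A k) := by
    intro m n hmn
    rw [Set.disjoint_left]
    rintro x ⟨hx1, _⟩ ⟨_, hx2⟩
    exact hx2 (Set.mem_iUnion.2 ⟨m, Set.mem_iUnion.2 ⟨hmn, hx1⟩⟩)
  refine ⟨⋃ n ∈ N, Dn n, ?_, ?_, ?_, ?_, ?_, ?_⟩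
  · intro d hd
    simp only [Set.mem_iUnion] at hd
    obtain ⟨n, hn, hd⟩ := hd
    exact (hDn n hn).1 hd
  · exact (Set.to_countable N).biUnion (fun n hn => (hDn n hn).2.1)
  · intro s hs t ht hst
    simp only [Set.mem_iUnion] at hs ht
    obtain ⟨n, hn, hs⟩ := hs
    obtain ⟨n', hn', ht⟩ := ht
    rcases lt_trichotomy n n' with h | rfl | h
    · exact (hGdisj n n' h).mono (hsubG n hn s hs) (hsubG n' hn' t ht)
    · exact (hDn n hn).2.2.1 hs ht hst
    · exact ((hGdisj n' n h).mono (hsubG n' hn' t ht) (hsubG n hn s hs)).symm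
  · apply Set.eq_of_subset_of_subset
    · rintro x ⟨s, hs, hxs⟩
      simp only [Set.mem_iUnion] at hs
      obtain ⟨n, hn, hs⟩ := hs
      exact Set.mem_iUnion.2 ⟨n, Set.mem_iUnion.2 ⟨hn, (hsubG n hn s hs hxs).1⟩⟩
    · intro x hx
      simp only [Set.mem_iUnion] at hx
      obtain ⟨n, hn, hx⟩ := hx
      have hex : ∃ k, k ∈ N ∧ x ∈ A k := ⟨n, hn, hx⟩
      set k := Nat.find hex with hk
      obtain ⟨hkN, hxk⟩ := Nat.find_spec hex
      have hxG : x ∈ A k \ ⋃ (m : ℕ) (_ : m < k), A m := by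
        refine ⟨hxk, ?_⟩
        intro hmem
        obtain ⟨m, hm⟩ := Set.mem_iUnion.1 hmem
        obtain ⟨hmk, hxm⟩ := Set.mem_iUnion.1 hm
        exact Nat.find_min hex hmk ⟨hN m k (le_of_lt hmk) hkN, hxm⟩
      have : x ∈ ⋃₀ Dn k := (hDn k hkN).2.2.2.1 ▸ hxG
      obtain ⟨s, hs, hxs⟩ := this
      exact ⟨s, Set.mem_iUnion.2 ⟨k, Set.mem_iUnion.2 ⟨hkN, hs⟩⟩, hxs⟩
  · intro n hn
    refine ⟨Dn n, ?_, (hDn n hn).2.2.2.1⟩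
    intro d hd
    exact Set.mem_iUnion.2 ⟨n, Set.mem_iUnion.2 ⟨hn, hd⟩⟩
  · intro d hd e he
    simp only [Set.mem_iUnion] at hd
    obtain ⟨n, hn, hd⟩ := hd
    exact (hDn n hn).2.2.2.2 d hd e he
end

section
/- Let 𝔖 be an interval system on a set X. Every set obtained from finitely many members of 𝔖 by a finite expression in the operations union, intersection and set difference is the union of a countable pairwise disjoint family of members of 𝔖. -/
/-- The sets obtained from finitely many members of `S` by a finite expression in the
operations union, intersection and set difference. -/
inductive Constructible {X : Type*} (S : Set (Set X)) : Set X → Prop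
  | base {A : Set X} : A ∈ S → Constructible S A
  | union {A B : Set X} : Constructible S A → Constructible S B → Constructible S (A ∪ B)
  | inter {A B : Set X} : Constructible S A → Constructible S B → Constructible S (A ∩ B)
  | sdiff {A B : Set X} : Constructible S A → Constructible S B → Constructible S (A \ B)

open Set

section

variable {X : Type*} {S : Set (Set X)}

def IsCountableDisjointUnion (S : Set (Set X)) (A : Set X) : Prop :=
  ∃ D : Set (Set X), D ⊆ S ∧ D.Countable ∧ D.PairwiseDisjoint id ∧ ⋃₀ D = A

namespace IsCountableDisjointUnion

theorem of_mem {A : Set X} (hA : A ∈ S) : IsCountableDisjointUnion S A :=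
  ⟨{A}, singleton_subset_iff.mpr hA, countable_singleton A, pairwiseDisjoint_singleton A id,
    sUnion_singleton A⟩

theorem sUnion {T : Set (Set X)} (hTc : T.Countable) (hTd : T.PairwiseDisjoint id)
    (h : ∀ t ∈ T, IsCountableDisjointUnion S t) : IsCountableDisjointUnion S (⋃₀ T) := by
  choose! D hDS hDc hDd hDu using h
  refine ⟨⋃ t ∈ T, D t, iUnion₂_subset hDS, hTc.biUnion hDc, ?_, ?_⟩
  · refine PairwiseDisjoint.biUnion (fun t ht u hu htu => ?_) hDd
    simp only [Function.onFun, id_eq, ← sSup_eq_iSup]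
    change Disjoint (⋃₀ D t) (⋃₀ D u)
    rw [hDu t ht, hDu u hu]
    exact hTd ht hu htu
  · simp only [sUnion_iUnion]
    rw [sUnion_eq_biUnion (s := T)]
    exact iUnion₂_congr hDu

theorem union {A B : Set X} (hA : IsCountableDisjointUnion S A)
    (hB : IsCountableDisjointUnion S B) (hAB : Disjoint A B) :
    IsCountableDisjointUnion S (A ∪ B) := by
  rw [← sUnion_pair]
  refine sUnion ((countable_singleton B).insert A) ?_ ?_
  · exact (pairwiseDisjoint_singleton B id).insert fun _ hC _ => mem_singleton_iff.mp hC ▸ hAB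
  · rintro t (rfl | rfl)
    exacts [hA, hB]

theorem inter_of_forall_mem {A B : Set X} (hA : IsCountableDisjointUnion S A)
    (hB : ∀ C ∈ S, IsCountableDisjointUnion S (C ∩ B)) :
    IsCountableDisjointUnion S (A ∩ B) := by
  obtain ⟨D, hDS, hDc, hDd, rfl⟩ := hA
  rw [sUnion_eq_biUnion, iUnion₂_inter, ← sUnion_image]
  refine sUnion (hDc.image _) (hDd.image_of_le fun C => inter_subset_left) ?_
  rintro _ ⟨C, hC, rfl⟩
  exact hB C (hDS hC)

end IsCountableDisjointUnion

def SplitsDisjointUnions (S : Set (Set X)) (B : Set X) : Prop :=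
  ∀ A, IsCountableDisjointUnion S A →
    IsCountableDisjointUnion S (A ∩ B) ∧ IsCountableDisjointUnion S (A ∩ Bᶜ)

namespace SplitsDisjointUnions

theorem of_mem (hS : IsIntervalSystem S) {B : Set X} (hB : B ∈ S) : SplitsDisjointUnions S B :=
  fun _ hA =>
    ⟨hA.inter_of_forall_mem fun C hC => (hS C hC B hB).2,
      hA.inter_of_forall_mem fun C hC => sdiff_eq C B ▸ (hS C hC B hB).1⟩

theorem compl {B : Set X} (hB : SplitsDisjointUnions S B) : SplitsDisjointUnions S Bᶜ :=
  fun A hA => by simpa only [compl_compl] using (hB A hA).symm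

theorem union {B₁ B₂ : Set X} (h₁ : SplitsDisjointUnions S B₁)
    (h₂ : SplitsDisjointUnions S B₂) : SplitsDisjointUnions S (B₁ ∪ B₂) := by
  intro A hA
  obtain ⟨hAB₁, hAnB₁⟩ := h₁ A hA
  have hsplit : A ∩ (B₁ ∪ B₂) = A ∩ B₁ ∪ A ∩ B₁ᶜ ∩ B₂ := by
    ext x; by_cases x ∈ B₁ <;> simp [*]
  refine ⟨?_, ?_⟩
  · rw [hsplit]
    exact hAB₁.union (h₂ _ hAnB₁).1 (disjoint_left.mpr fun x hx hx' => hx'.1.2 hx.2)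
  · simpa only [compl_union, inter_assoc] using (h₂ _ hAnB₁).2

theorem inter {B₁ B₂ : Set X} (h₁ : SplitsDisjointUnions S B₁)
    (h₂ : SplitsDisjointUnions S B₂) : SplitsDisjointUnions S (B₁ ∩ B₂) := by
  simpa only [compl_union, compl_compl] using (h₁.compl.union h₂.compl).compl

theorem sdiff {B₁ B₂ : Set X} (h₁ : SplitsDisjointUnions S B₁)
    (h₂ : SplitsDisjointUnions S B₂) : SplitsDisjointUnions S (B₁ \ B₂) :=
  sdiff_eq B₁ B₂ ▸ h₁.inter h₂.compl

end SplitsDisjointUnions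

theorem Constructible.splitsDisjointUnions (hS : IsIntervalSystem S) {B : Set X}
    (hB : Constructible S B) : SplitsDisjointUnions S B := by
  induction hB with
  | base hB => exact .of_mem hS hB
  | union _ _ ih₁ ih₂ => exact ih₁.union ih₂
  | inter _ _ ih₁ ih₂ => exact ih₁.inter ih₂
  | sdiff _ _ ih₁ ih₂ => exact ih₁.sdiff ih₂

end

/-- Let `S` be an interval system on `X`. Every set obtained from finitely many
members of `S` by a finite expression in `∪`, `∩`, `\` is the union of a countable pairwise
disjoint family of members of `S`. -/
theorem statement2 {X : Type*} (S : Set (Set X)) (hS : IsIntervalSystem S)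
    (A : Set X) (hA : Constructible S A) :
    ∃ D : Set (Set X), D ⊆ S ∧ D.Countable ∧ D.PairwiseDisjoint id ∧ ⋃₀ D = A := by
  change IsCountableDisjointUnion S A
  induction hA with
  | base hA => exact .of_mem hA
  | @union A₁ A₂ h₁ _ ih₁ ih₂ =>
    rw [← union_sdiff_self]
    exact ih₁.union (sdiff_eq A₂ A₁ ▸ (h₁.splitsDisjointUnions hS _ ih₂).2) disjoint_sdiff_right
  | inter _ h₂ ih₁ _ => exact (h₂.splitsDisjointUnions hS _ ih₁).1
  | sdiff _ h₂ ih₁ _ => exact sdiff_eq _ _ ▸ (h₂.splitsDisjointUnions hS _ ih₁).2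
end

section
/- Let 𝔍 be the family of all bounded (possibly empty or degenerate) intervals of ℝ and let l : 𝔍 → ℝ be the interval length function. Then 𝔍 is an interval system on ℝ, and l is σ-additive: whenever I ∈ 𝔍 is the union of a countable pairwise disjoint family (I_λ)_{λ∈Λ} of members of 𝔍, the family (l(I_λ)) is summable with sum l(I). -/
/-- A map `μ` defined on the sets of `X`, with values in a commutative topological group, is
a *measure* on the set system `S` if it is σ-additive on `S`: whenever a member `B` of `S`
is the union of a countable pairwise disjoint family `(A i)` of members of `S`, the net of
finite partial sums `∑ i ∈ Ξ, μ (A i)` (over finite `Ξ`, directed by inclusion) converges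
to `μ B`, i.e. `HasSum (fun i => μ (A i)) (μ B)`. -/
def IsAddMeasure {X W : Type*} [AddCommMonoid W] [TopologicalSpace W]
    (S : Set (Set X)) (μ : Set X → W) : Prop :=
  ∀ (ι : Type) (A : ι → Set X) (B : Set X), Countable ι → B ∈ S →
    (∀ i, A i ∈ S) → (Pairwise fun i j => Disjoint (A i) (A j)) →
    (⋃ i, A i) = B → HasSum (fun i => μ (A i)) (μ B)

/-- The family of all bounded (possibly empty or degenerate) intervals of `ℝ`:
the bounded order-connected subsets of `ℝ`. -/
def boundedIntervals : Set (Set ℝ) :=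
  {I : Set ℝ | I.OrdConnected ∧ Bornology.IsBounded I}

/-- The interval length function (`= 0` on the empty set, by the conventions
`sSup ∅ = sInf ∅ = 0` in `ℝ`). -/
noncomputable def intervalLength (I : Set ℝ) : ℝ := sSup I - sInf I

/-! The difference `A \ B` of two intervals splits at any point `b ∈ B` into its parts left and
right of `b`, both intervals. A bounded interval `I` lies between `Ioo (sInf I) (sSup I)` and
`Icc (sInf I) (sSup I)`, so its length is its Lebesgue measure, and σ-additivity of the length is
countable additivity of Lebesgue measure. -/

open Set MeasureTheory

theorem IsIntervalSystem.of_inter_mem_of_diff_eq_union {X : Type*} {S : Set (Set X)}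
    (hinter : ∀ A ∈ S, ∀ B ∈ S, A ∩ B ∈ S)
    (hdiff : ∀ A ∈ S, ∀ B ∈ S, ∃ C ∈ S, ∃ D ∈ S, Disjoint C D ∧ A \ B = C ∪ D) :
    IsIntervalSystem S := by
  intro A hA B hB
  refine ⟨?_, {A ∩ B}, singleton_subset_iff.2 (hinter A hA B hB), countable_singleton _,
    pairwiseDisjoint_singleton _ _, sUnion_singleton _⟩
  obtain ⟨C, hC, D, hD, hCD, hAB⟩ := hdiff A hA B hB
  refine ⟨{C, D}, pair_subset hC hD, (countable_singleton D).insert C, ?_, by rw [sUnion_pair, hAB]⟩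
  rintro s (rfl | rfl) t (rfl | rfl) hst
  exacts [absurd rfl hst, hCD, hCD.symm, absurd rfl hst]

theorem isAddMeasure_measureReal {X : Type*} [MeasurableSpace X] (μ : Measure X)
    {S : Set (Set X)} (hS : ∀ s ∈ S, NullMeasurableSet s μ) (hfin : ∀ s ∈ S, μ s ≠ ⊤) :
    IsAddMeasure S μ.real := by
  rintro ι A _ _ hB hA hdisj rfl
  have hsum : ∑' i, μ (A i) = μ (⋃ i, A i) :=
    (measure_iUnion₀ (hdisj.mono fun _ _ h => h.aedisjoint) fun i => hS _ (hA i)).symm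
  have := ENNReal.hasSum_toReal (hsum ▸ hfin _ hB)
  rwa [← ENNReal.tsum_toReal_eq fun i => hfin _ (hA i), hsum] at this

theorem IsAddMeasure.congr {X W : Type*} [AddCommMonoid W] [TopologicalSpace W]
    {S : Set (Set X)} {μ ν : Set X → W} (h : IsAddMeasure S μ) (hμν : EqOn μ ν S) :
    IsAddMeasure S ν := by
  intro ι A B hι hB hA hdisj hAB
  rw [← hμν hB, funext fun i => (hμν (hA i)).symm]
  exact h ι A B hι hB hA hdisj hAB

section LinearOrder

variable {α : Type*} [LinearOrder α] {A B : Set α} {b : α}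

theorem Set.OrdConnected.diff_inter_Iio (hA : A.OrdConnected) (hB : B.OrdConnected)
    (hb : b ∈ B) : ((A \ B) ∩ Iio b).OrdConnected := by
  refine ⟨?_⟩
  rintro x ⟨⟨hxA, -⟩, -⟩ y ⟨⟨hyA, hyB⟩, hy⟩ z hz
  exact ⟨⟨hA.out hxA hyA hz, fun hzB => hyB (hB.out hzB hb ⟨hz.2, hy.le⟩)⟩, hz.2.trans_lt hy⟩

theorem Set.OrdConnected.diff_inter_Ioi (hA : A.OrdConnected) (hB : B.OrdConnected)
    (hb : b ∈ B) : ((A \ B) ∩ Ioi b).OrdConnected := by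
  refine ⟨?_⟩
  rintro x ⟨⟨hxA, hxB⟩, hx⟩ y ⟨⟨hyA, -⟩, -⟩ z hz
  exact ⟨⟨hA.out hxA hyA hz, fun hzB => hxB (hB.out hb hzB ⟨hx.le, hz.1⟩)⟩, hx.trans_le hz.1⟩

theorem Set.diff_eq_inter_Iio_union_inter_Ioi (hb : b ∈ B) :
    A \ B = (A \ B) ∩ Iio b ∪ (A \ B) ∩ Ioi b := by
  rw [← inter_union_distrib_left, Iio_union_Ioi]
  refine (inter_eq_left.2 fun x hx hxb => hx.2 ?_).symm
  exact mem_singleton_iff.1 hxb ▸ hb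

end LinearOrder

theorem Set.OrdConnected.volume_eq {I : Set ℝ} (hI : I.OrdConnected)
    (hb : Bornology.IsBounded I) : volume I = ENNReal.ofReal (sSup I - sInf I) := by
  rcases I.eq_empty_or_nonempty with rfl | hne
  · simp
  refine le_antisymm ?_ ?_
  · simpa using measure_mono (μ := volume) hb.subset_Icc_sInf_sSup
  · simpa using measure_mono (μ := volume)
      (IsConnected.Ioo_csInf_csSup_subset ⟨hne, hI.isPreconnected⟩ hb.bddBelow hb.bddAbove)

theorem boundedIntervals_isIntervalSystem : IsIntervalSystem boundedIntervals := by
  refine .of_inter_mem_of_diff_eq_union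
    (fun A hA B hB => ⟨hA.1.inter hB.1, hA.2.subset inter_subset_left⟩) ?_
  intro A hA B hB
  rcases B.eq_empty_or_nonempty with rfl | ⟨b, hb⟩
  · exact ⟨A, hA, ∅, ⟨ordConnected_empty, Bornology.isBounded_empty⟩, disjoint_empty _, by simp⟩
  have hbdd : Bornology.IsBounded (A \ B) := hA.2.subset sdiff_subset
  refine ⟨_, ⟨hA.1.diff_inter_Iio hB.1 hb, hbdd.subset inter_subset_left⟩,
    _, ⟨hA.1.diff_inter_Ioi hB.1 hb, hbdd.subset inter_subset_left⟩, ?_,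
    diff_eq_inter_Iio_union_inter_Ioi hb⟩
  exact Ioi_disjoint_Iio_same.symm.mono inter_subset_right inter_subset_right

theorem measureReal_volume_eq_intervalLength {I : Set ℝ} (hI : I ∈ boundedIntervals) :
    volume.real I = intervalLength I := by
  rw [measureReal_def, hI.1.volume_eq hI.2, ENNReal.toReal_ofReal, intervalLength]
  exact sub_nonneg.2 (Real.sInf_le_sSup I hI.2.bddBelow hI.2.bddAbove)

/-- The family of bounded intervals of `ℝ` is an interval system, and the
interval length function is σ-additive on it: whenever a bounded interval is the countable
pairwise disjoint union of bounded intervals, the family of their lengths is summable with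
sum the length of the whole interval. -/
theorem statement3 :
    IsIntervalSystem boundedIntervals ∧ IsAddMeasure boundedIntervals intervalLength :=
  ⟨boundedIntervals_isIntervalSystem,
    (isAddMeasure_measureReal volume (fun _ hI => hI.1.measurableSet.nullMeasurableSet)
      fun _ hI => hI.2.measure_lt_top.ne).congr
      fun _ hI => measureReal_volume_eq_intervalLength hI⟩
end

section
/- Let 𝔖 be an interval system on a set X and μ : 𝔖 → ℝ a measure with μ(S) ≥ 0 for all S ∈ 𝔖. If A ∈ 𝔖 and (A_λ)_{λ∈Λ} is a countable pairwise disjoint family of members of 𝔖 with A_λ ⊆ A for every λ, then the family (μ(A_λ)) is summable and ∑_{λ∈Λ} μ(A_λ) ≤ μ(A). -/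
open Set Filter

/-- Tendsto of `Finset.toLeft` to `atTop`. -/
private lemma tendsto_toLeft_atTop {α β : Type*} :
    Tendsto (Finset.toLeft : Finset (α ⊕ β) → Finset α) atTop atTop := by
  apply tendsto_atTop_atTop_of_monotone Finset.toLeft_monotone
  intro b
  exact ⟨b.map ⟨Sum.inl, Sum.inl_injective⟩, fun x hx => by simpa using hx⟩

private lemma tendsto_toRight_atTop {α β : Type*} :
    Tendsto (Finset.toRight : Finset (α ⊕ β) → Finset β) atTop atTop := by
  apply tendsto_atTop_atTop_of_monotone Finset.toRight_monotone
  intro b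
  exact ⟨b.map ⟨Sum.inr, Sum.inr_injective⟩, fun x hx => by simpa using hx⟩

/-- `HasSum` for a `Sum.elim` family. -/
private lemma hasSum_sum_elim {α β : Type*} {f : α → ℝ} {g : β → ℝ} {a b : ℝ}
    (hf : HasSum f a) (hg : HasSum g b) : HasSum (Sum.elim f g) (a + b) := by
  have key : ∀ u : Finset (α ⊕ β),
      ∑ x ∈ u, Sum.elim f g x = ∑ x ∈ u.toLeft, f x + ∑ x ∈ u.toRight, g x := by
    intro u
    conv_lhs => rw [← Finset.toLeft_disjSum_toRight (u := u),
      ← Finset.map_inl_disjUnion_map_inr, Finset.sum_disjUnion, Finset.sum_map, Finset.sum_map]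
    simp
  have : Tendsto (fun u : Finset (α ⊕ β) =>
      ∑ x ∈ u.toLeft, f x + ∑ x ∈ u.toRight, g x) atTop (nhds (a + b)) :=
    (hf.comp _root_.tendsto_toLeft_atTop).add (hg.comp _root_.tendsto_toRight_atTop)
  simpa only [HasSum, key, SummationFilter.unconditional_filter] using this

/-- σ-additivity for index types in arbitrary universes. -/
private lemma measure_iUnion {X : Type u} {S : Set (Set X)} {μ : Set X → ℝ}
    (hμ : IsAddMeasure S μ) {ι : Type v} [Countable ι]
    (A : ι → Set X) (B : Set X) (hB : B ∈ S) (hA : ∀ i, A i ∈ S)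
    (hd : Pairwise fun i j => Disjoint (A i) (A j)) (hU : (⋃ i, A i) = B) :
    HasSum (fun i => μ (A i)) (μ B) := by
  obtain ⟨f, hf⟩ := exists_injective_nat ι
  let e : ι ≃ Set.range f := Equiv.ofInjective f hf
  have h1 : ∀ x : Set.range f, A (e.symm x) ∈ S := fun x => hA _
  have h2 : Pairwise fun x y : Set.range f => Disjoint (A (e.symm x)) (A (e.symm y)) :=
    hd.comp_of_injective e.symm.injective
  have h3 : (⋃ x : Set.range f, A (e.symm x)) = B := by
    rw [e.symm.surjective.iUnion_comp A]; exact hU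
  have := hμ (Set.range f) (fun x => A (e.symm x)) B inferInstance hB h1 h2 h3
  exact (e.symm.hasSum_iff (f := fun i => μ (A i))).1 this

private lemma key_lemma {X : Type u} {S : Set (Set X)} {μ : Set X → ℝ}
    (hS : IsIntervalSystem S) (hμ : IsAddMeasure S μ) (hnn : ∀ B ∈ S, 0 ≤ μ B)
    {J : Type w} (C : J → Set X) (hC : ∀ j, C j ∈ S)
    (hCd : Pairwise fun i j => Disjoint (C i) (C j)) (t : Finset J) :
    ∀ (κ : Type u) [Countable κ], ∀ (D : κ → Set X),
      (∀ k, D k ∈ S) → (Pairwise fun k l => Disjoint (D k) (D l)) →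
      (∀ j ∈ t, C j ⊆ ⋃ k, D k) → ∀ s : ℝ, HasSum (fun k => μ (D k)) s →
      ∑ j ∈ t, μ (C j) ≤ s := by
  classical
  induction t using Finset.cons_induction with
  | empty =>
    intro κ _ D hDS hDd _ s hs
    simp only [Finset.sum_empty]
    rw [← hs.tsum_eq]
    exact tsum_nonneg fun k => hnn _ (hDS k)
  | cons j₀ t hj₀ IH =>
    intro κ _ D hDS hDd hsub s hs
    set E := C j₀ with hEdef
    have hE : E ∈ S := hC j₀
    have hEsub : E ⊆ ⋃ k, D k := hsub j₀ (Finset.mem_cons_self _ _)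
    have h1 : ∀ k, ∃ F : Set (Set X),
        F ⊆ S ∧ F.Countable ∧ F.PairwiseDisjoint id ∧ ⋃₀ F = D k \ E :=
      fun k => (hS (D k) (hDS k) E hE).1
    have h2 : ∀ k, ∃ G : Set (Set X),
        G ⊆ S ∧ G.Countable ∧ G.PairwiseDisjoint id ∧ ⋃₀ G = D k ∩ E :=
      fun k => (hS (D k) (hDS k) E hE).2
    choose F hFS hFc hFd hFU using h1
    choose G hGS hGc hGd hGU using h2
    haveI : ∀ k, Countable (F k) := fun k => (hFc k).to_subtype
    haveI : ∀ k, Countable (G k) := fun k => (hGc k).to_subtype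
    -- basic facts about pieces
    have hFmem : ∀ k (d : F k), (d : Set X) ∈ S := fun k d => hFS k d.2
    have hGmem : ∀ k (d : G k), (d : Set X) ∈ S := fun k d => hGS k d.2
    have hFsub : ∀ k (d : F k), (d : Set X) ⊆ D k \ E := fun k d => by
      rw [← hFU k]; exact subset_sUnion_of_mem d.2
    have hGsub : ∀ k (d : G k), (d : Set X) ⊆ D k ∩ E := fun k d => by
      rw [← hGU k]; exact subset_sUnion_of_mem d.2
    have hFpair : ∀ k, Pairwise fun d d' : F k => Disjoint (d : Set X) (d' : Set X) :=
      fun k d d' hne => hFd k d.2 d'.2 (fun h => hne (Subtype.ext h))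
    have hGpair : ∀ k, Pairwise fun d d' : G k => Disjoint (d : Set X) (d' : Set X) :=
      fun k d d' hne => hGd k d.2 d'.2 (fun h => hne (Subtype.ext h))
    -- per-k decomposition: μ (D k) is the sum over F k pieces and G k pieces
    have hDk : ∀ k, HasSum (Sum.elim (fun d : F k => μ d) (fun d : G k => μ d)) (μ (D k)) := by
      intro k
      have := measure_iUnion hμ
        (Sum.elim (fun d : F k => (d : Set X)) (fun d : G k => (d : Set X))) (D k) (hDS k)
        (by rintro (d | d); exacts [hFmem k d, hGmem k d])
        (by
          have hdisjFG : Disjoint (D k \ E) (D k ∩ E) :=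
            disjoint_sdiff_left.mono_right inter_subset_right
          rintro (d | d) (d' | d') hne
          · exact hFpair k (fun h => hne (by rw [h]))
          · exact hdisjFG.mono (hFsub k d) (hGsub k d')
          · exact (hdisjFG.symm).mono (hGsub k d) (hFsub k d')
          · exact hGpair k (fun h => hne (by rw [h])))
        (by
          rw [iUnion_sum]
          simp only [Sum.elim_inl, Sum.elim_inr]
          rw [← sUnion_eq_iUnion, ← sUnion_eq_iUnion, hFU, hGU, Set.diff_union_inter])
      convert this using 1
      funext x; cases x <;> rfl
    have hFsumm : ∀ k, Summable (fun d : F k => μ d) := fun k =>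
      ((hDk k).summable.comp_injective Sum.inl_injective)
    have hGsumm : ∀ k, Summable (fun d : G k => μ d) := fun k =>
      ((hDk k).summable.comp_injective Sum.inr_injective)
    set f : κ → ℝ := fun k => ∑' d : F k, μ d with hfdef
    set g : κ → ℝ := fun k => ∑' d : G k, μ d with hgdef
    have hfg : ∀ k, f k + g k = μ (D k) := fun k =>
      (hasSum_sum_elim (hFsumm k).hasSum (hGsumm k).hasSum).unique (hDk k)
    have hf0 : ∀ k, 0 ≤ f k := fun k => tsum_nonneg fun d => hnn _ (hFmem k d)
    have hg0 : ∀ k, 0 ≤ g k := fun k => tsum_nonneg fun d => hnn _ (hGmem k d)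
    have hfle : ∀ k, f k ≤ μ (D k) := fun k => by
      rw [← hfg k]; linarith [hg0 k]
    have hgle : ∀ k, g k ≤ μ (D k) := fun k => by
      rw [← hfg k]; linarith [hf0 k]
    have hfSumm : Summable f := Summable.of_nonneg_of_le hf0 hfle hs.summable
    have hgSumm : Summable g := Summable.of_nonneg_of_le hg0 hgle hs.summable
    -- μ E equals the sum over all G pieces
    have hEsum : HasSum (fun p : Σ k, G k => μ (p.2 : Set X)) (μ E) := by
      apply measure_iUnion hμ (fun p : Σ k, G k => (p.2 : Set X)) E hE
        (fun p => hGmem p.1 p.2)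
      · rintro ⟨k, d⟩ ⟨l, e'⟩ hne
        dsimp only
        by_cases hkl : k = l
        · subst hkl
          exact hGpair k (fun h => hne (by rw [h]))
        · exact ((hDd hkl).mono inter_subset_left inter_subset_left).mono
            (hGsub k d) (hGsub l e')
      · rw [iUnion_sigma]
        have : ∀ k, ⋃ d : G k, (d : Set X) = D k ∩ E := fun k => by
          rw [← sUnion_eq_iUnion, hGU]
        simp only [this]
        rw [← Set.iUnion_inter, Set.inter_eq_self_of_subset_right hEsub]
    -- the total F family is summable
    have hσnn : ∀ p : Σ k, F k, 0 ≤ μ (p.2 : Set X) := fun p => hnn _ (hFmem p.1 p.2)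
    have hσSumm : Summable (fun p : Σ k, F k => μ (p.2 : Set X)) :=
      (summable_sigma_of_nonneg hσnn).2 ⟨fun k => hFsumm k, by simpa using hfSumm⟩
    set s' : ℝ := ∑' p : Σ k, F k, μ (p.2 : Set X) with hs'def
    have hσHasSum : HasSum (fun p : Σ k, F k => μ (p.2 : Set X)) s' := hσSumm.hasSum
    -- compute s' = s - μ E
    have hs'eq : s' = s - μ E := by
      have e1 : s' = ∑' k, f k := Summable.tsum_sigma hσSumm
      have e2 : μ E = ∑' k, g k := by
        rw [← hEsum.tsum_eq]; exact Summable.tsum_sigma hEsum.summable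
      have e3 : ∑' k, f k + ∑' k, g k = s := by
        rw [← Summable.tsum_add hfSumm hgSumm, ← hs.tsum_eq]
        exact tsum_congr hfg
      rw [e1, e2]; linarith
    -- apply the inductive hypothesis to the F family
    have hIH := IH (Σ k, F k) (fun p => (p.2 : Set X)) (fun p => hFmem p.1 p.2)
      (by
        rintro ⟨k, d⟩ ⟨l, e'⟩ hne
        dsimp only
        by_cases hkl : k = l
        · subst hkl
          exact hFpair k (fun h => hne (by rw [h]))
        · exact ((hDd hkl).mono (diff_subset) (diff_subset)).mono
            (hFsub k d) (hFsub l e'))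
      (by
        intro j hj x hx
        have hjne : j ≠ j₀ := fun h => hj₀ (h ▸ hj)
        have hxE : x ∉ E := fun hxE =>
          (hCd hjne).ne_of_mem hx hxE rfl
        obtain ⟨_, ⟨k, rfl⟩, hxk⟩ := hsub j (Finset.mem_cons_of_mem hj) hx
        have : x ∈ ⋃₀ F k := by rw [hFU k]; exact ⟨hxk, hxE⟩
        obtain ⟨d, hd, hxd⟩ := this
        exact Set.mem_iUnion.2 ⟨⟨k, ⟨d, hd⟩⟩, hxd⟩)
      s' hσHasSum
    rw [Finset.sum_cons]
    rw [hs'eq] at hIH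
    linarith

/-- Let `S` be an interval system on `X` and `μ : S → ℝ` a nonnegative measure.
If `A ∈ S` and `(B i)` is a countable pairwise disjoint family of members of `S` contained in
`A`, then `(μ (B i))` is summable and `∑' i, μ (B i) ≤ μ A`. -/
theorem statement4 {X : Type*} (S : Set (Set X)) (hS : IsIntervalSystem S)
    (μ : Set X → ℝ) (hμ : IsAddMeasure S μ) (hnn : ∀ B ∈ S, 0 ≤ μ B)
    (A : Set X) (hA : A ∈ S) (ι : Type*) [Countable ι]
    (B : ι → Set X) (hB : ∀ i, B i ∈ S)
    (hdisj : Pairwise fun i j => Disjoint (B i) (B j))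
    (hsub : ∀ i, B i ⊆ A) :
    Summable (fun i => μ (B i)) ∧ ∑' i, μ (B i) ≤ μ A := by
  have hfin : ∀ t : Finset ι, ∑ i ∈ t, μ (B i) ≤ μ A := by
    intro t
    have hAsum : HasSum (fun _ : PUnit => μ A) (μ A) := by
      simpa using hasSum_fintype (fun _ : PUnit => μ A)
    exact key_lemma hS hμ hnn B hB hdisj t PUnit (fun _ => A)
      (fun _ => hA) (Subsingleton.pairwise)
      (fun j _ => by rw [Set.iUnion_const]; exact hsub j) (μ A) hAsum
  have hsumm : Summable (fun i => μ (B i)) :=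
    summable_of_sum_le (fun i => hnn _ (hB i)) hfin
  exact ⟨hsumm, Summable.tsum_le_of_sum_le hsumm hfin⟩
end

section
/- Let S be a nonempty positive vector lattice on a set X and μ̃ : S → ℝ a Daniell functional. For f ∈ S define |μ̃|⁺(f) = sup { ∑_λ max(μ̃(f_λ), 0) : (f_λ)_{λ∈Λ} a countable family in S with ∑_λ f_λ(x) = f(x) for all x ∈ X } ∈ [0,∞], and define |μ̃|⁻(f) and |μ̃|(f) analogously using max(−μ̃(f_λ), 0) and |μ̃(f_λ)| respectively. Then: |μ̃|⁺(f) = sup { μ̃(g) : g ∈ S, g ≤ f pointwise }, |μ̃|⁻(f) = −inf { μ̃(g) : g ∈ S, g ≤ f pointwise }, |μ̃|(f) = |μ̃|⁺(f) + |μ̃|⁻(f); moreover |μ̃|⁺(f) is finite if and only if |μ̃|⁻(f) is finite, and in that case μ̃(f) = |μ̃|⁺(f) − |μ̃|⁻(f). -/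
open ENNReal

/-- `|μ|⁺(f)`: the supremum, over all countable families `(g i)` in `S` with
`∑ i, g i x = f x` for every `x`, of `∑ i, max (μ (g i)) 0`, computed in `[0, ∞]`. -/
noncomputable def posVarD {X : Type*} (S : Set (X → ℝ)) (μ : (X → ℝ) → ℝ) (f : X → ℝ) : ℝ≥0∞ :=
  sSup { s : ℝ≥0∞ | ∃ (ι : Type) (_ : Countable ι) (g : ι → X → ℝ),
    (∀ i, g i ∈ S) ∧ (∀ x, HasSum (fun i => g i x) (f x)) ∧
    s = ∑' i, ENNReal.ofReal (μ (g i)) }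

/-- `|μ|⁻(f)`: as `posVarD`, with `max (-μ (g i)) 0` in place of `max (μ (g i)) 0`. -/
noncomputable def negVarD {X : Type*} (S : Set (X → ℝ)) (μ : (X → ℝ) → ℝ) (f : X → ℝ) : ℝ≥0∞ :=
  sSup { s : ℝ≥0∞ | ∃ (ι : Type) (_ : Countable ι) (g : ι → X → ℝ),
    (∀ i, g i ∈ S) ∧ (∀ x, HasSum (fun i => g i x) (f x)) ∧
    s = ∑' i, ENNReal.ofReal (-μ (g i)) }

/-- `|μ|(f)`: as `posVarD`, with `|μ (g i)|` in place of `max (μ (g i)) 0`. -/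
noncomputable def totVarD {X : Type*} (S : Set (X → ℝ)) (μ : (X → ℝ) → ℝ) (f : X → ℝ) : ℝ≥0∞ :=
  sSup { s : ℝ≥0∞ | ∃ (ι : Type) (_ : Countable ι) (g : ι → X → ℝ),
    (∀ i, g i ∈ S) ∧ (∀ x, HasSum (fun i => g i x) (f x)) ∧
    s = ∑' i, ENNReal.ofReal |μ (g i)| }

open Filter


section aux
variable {X : Type*} {S : Set (X → ℝ)} {μ : (X → ℝ) → ℝ}

lemma zero_mem' (hne : S.Nonempty)
    (htrunc : ∀ f ∈ S, ∀ g ∈ S, (fun x => max (f x - g x) 0) ∈ S) :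
    (0 : X → ℝ) ∈ S := by
  obtain ⟨w, hw⟩ := hne
  have := htrunc w hw w hw
  simpa [Pi.zero_def] using this

lemma mu_zero' (h0 : (0 : X → ℝ) ∈ S)
    (hDaniell : ∀ f ∈ S, ∀ fn : ℕ → X → ℝ, (∀ n, fn n ∈ S) →
      (∀ x, Filter.Tendsto (fun N => ∑ n ∈ Finset.range N, fn n x)
        Filter.atTop (nhds (f x))) →
      Filter.Tendsto (fun N => ∑ n ∈ Finset.range N, μ (fn n))
        Filter.atTop (nhds (μ f))) :
    μ 0 = 0 := by
  have h := hDaniell 0 h0 (fun _ => 0) (fun _ => h0) (by simp [tendsto_const_nhds])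
  simp only [Finset.sum_const, Finset.card_range, nsmul_eq_mul] at h
  have h2 : Tendsto (fun N : ℕ => ((N:ℝ)+1) * μ 0) atTop (nhds (μ 0)) := by
    have := h.comp (tendsto_add_atTop_nat 1)
    apply this.congr
    intro n
    simp only [Function.comp]
    push_cast
    ring
  have h3 : Tendsto (fun _ : ℕ => μ 0) atTop (nhds 0) := by
    have := h2.sub h
    have e : ∀ N : ℕ, ((N:ℝ)+1) * μ 0 - N * μ 0 = μ 0 := by intro N; ring
    simpa [e] using this
  exact tendsto_nhds_unique tendsto_const_nhds h3

end aux

section aux2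
variable {X : Type*} {S : Set (X → ℝ)} {μ : (X → ℝ) → ℝ}

lemma mu_add' (h0 : (0 : X → ℝ) ∈ S) (hμ0 : μ 0 = 0)
    (hDaniell : ∀ f ∈ S, ∀ fn : ℕ → X → ℝ, (∀ n, fn n ∈ S) →
      (∀ x, Filter.Tendsto (fun N => ∑ n ∈ Finset.range N, fn n x)
        Filter.atTop (nhds (f x))) →
      Filter.Tendsto (fun N => ∑ n ∈ Finset.range N, μ (fn n))
        Filter.atTop (nhds (μ f)))
    (hadd : ∀ f ∈ S, ∀ g ∈ S, f + g ∈ S)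
    {a b : X → ℝ} (ha : a ∈ S) (hb : b ∈ S) :
    μ (a + b) = μ a + μ b := by
  set fn : ℕ → X → ℝ := fun n => if n = 0 then a else if n = 1 then b else 0 with hfn
  have hmem : ∀ n, fn n ∈ S := by
    intro n
    simp only [hfn]
    split_ifs <;> assumption
  have hkey : ∀ (h : ℕ → ℝ), ∀ N ≥ 2, ∑ n ∈ Finset.range N, h n
      = h 0 + h 1 + ∑ n ∈ Finset.range N, (if n = 0 then 0 else if n = 1 then 0 else h n) := by
    intro h N hN
    induction N with
    | zero => omega
    | succ m ih =>
      rcases Nat.lt_or_ge m 2 with hm | hm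
      · interval_cases m
        · omega
        · simp [Finset.sum_range_succ]
      · rw [Finset.sum_range_succ, ih hm, Finset.sum_range_succ]
        have : m ≠ 0 := by omega
        have : m ≠ 1 := by omega
        simp_all
        ring
  have hpt : ∀ x, Filter.Tendsto (fun N => ∑ n ∈ Finset.range N, fn n x)
      Filter.atTop (nhds ((a + b) x)) := by
    intro x
    apply Tendsto.congr' _ (tendsto_const_nhds (x := (a + b) x))
    filter_upwards [Filter.eventually_ge_atTop 2] with N hN
    rw [hkey (fun n => fn n x) N hN]
    have : ∀ n, (if n = 0 then (0:ℝ) else if n = 1 then 0 else fn n x) = 0 := by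
      intro n; simp only [hfn]; split_ifs <;> simp
    simp only [this, Finset.sum_const_zero, add_zero]
    simp [this, hfn, Pi.add_apply]
  have h2 := hDaniell (a + b) (hadd a ha b hb) fn hmem hpt
  have h3 : Filter.Tendsto (fun N => ∑ n ∈ Finset.range N, μ (fn n))
      Filter.atTop (nhds (μ a + μ b)) := by
    apply Tendsto.congr' _ (tendsto_const_nhds (x := μ a + μ b))
    filter_upwards [Filter.eventually_ge_atTop 2] with N hN
    rw [hkey (fun n => μ (fn n)) N hN]
    have : ∀ n, (if n = 0 then (0:ℝ) else if n = 1 then 0 else μ (fn n)) = 0 := by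
      intro n; simp only [hfn]; split_ifs <;> simp [hμ0]
    simp only [this, Finset.sum_const_zero, add_zero]
    simp [this, hfn]
  exact tendsto_nhds_unique h2 h3

lemma sum_mem' (h0 : (0 : X → ℝ) ∈ S)
    (hadd : ∀ f ∈ S, ∀ g ∈ S, f + g ∈ S)
    {ι : Type*} {g : ι → X → ℝ} (hg : ∀ i, g i ∈ S) (F : Finset ι) :
    (∑ i ∈ F, g i) ∈ S := by
  classical
  induction F using Finset.cons_induction with
  | empty => simpa using h0
  | cons i F hi ih => rw [Finset.sum_cons]; exact hadd _ (hg i) _ ih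

lemma mu_sum' (h0 : (0 : X → ℝ) ∈ S) (hμ0 : μ 0 = 0)
    (hadd : ∀ f ∈ S, ∀ g ∈ S, f + g ∈ S)
    (hμadd : ∀ a ∈ S, ∀ b ∈ S, μ (a + b) = μ a + μ b)
    {ι : Type*} {g : ι → X → ℝ} (hg : ∀ i, g i ∈ S) (F : Finset ι) :
    μ (∑ i ∈ F, g i) = ∑ i ∈ F, μ (g i) := by
  classical
  induction F using Finset.cons_induction with
  | empty => simpa using hμ0
  | cons i F hi ih =>
    rw [Finset.sum_cons, Finset.sum_cons, hμadd _ (hg i) _ (sum_mem' h0 hadd hg F), ih]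

end aux2

section core
variable {X : Type*} {S : Set (X → ℝ)} {μ : (X → ℝ) → ℝ} {f : X → ℝ}

lemma posVar_eq (hpos : ∀ f ∈ S, ∀ x, 0 ≤ f x)
    (hadd : ∀ f ∈ S, ∀ g ∈ S, f + g ∈ S)
    (htrunc : ∀ f ∈ S, ∀ g ∈ S, (fun x => max (f x - g x) 0) ∈ S)
    (h0 : (0 : X → ℝ) ∈ S) (hμ0 : μ 0 = 0)
    (hμadd : ∀ a ∈ S, ∀ b ∈ S, μ (a + b) = μ a + μ b)
    (hf : f ∈ S) :
    posVarD S μ f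
      = ⨆ t : {g : X → ℝ // g ∈ S ∧ ∀ x, g x ≤ f x}, ENNReal.ofReal (μ t.1) := by
  classical
  apply le_antisymm
  · apply sSup_le
    rintro s ⟨ι, hc, g, hgS, hsum, rfl⟩
    rw [ENNReal.tsum_eq_iSup_sum]
    apply iSup_le; intro F
    set F' := F.filter (fun i => 0 < μ (g i)) with hF'
    have h1 : ∑ i ∈ F', ENNReal.ofReal (μ (g i)) = ∑ i ∈ F, ENNReal.ofReal (μ (g i)) := by
      apply Finset.sum_filter_of_ne
      intro i _ hne
      by_contra hcon
      exact hne (ENNReal.ofReal_eq_zero.2 (le_of_not_gt hcon))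
    have h2 : ∑ i ∈ F', ENNReal.ofReal (μ (g i)) = ENNReal.ofReal (∑ i ∈ F', μ (g i)) := by
      rw [ENNReal.ofReal_sum_of_nonneg]
      intro i hi
      exact le_of_lt (Finset.mem_filter.1 hi).2
    have hhS : (∑ i ∈ F', g i) ∈ S := sum_mem' h0 hadd hgS F'
    have hμh : μ (∑ i ∈ F', g i) = ∑ i ∈ F', μ (g i) := mu_sum' h0 hμ0 hadd hμadd hgS F'
    have hle : ∀ x, (∑ i ∈ F', g i) x ≤ f x := by
      intro x
      have := sum_le_hasSum F' (fun i _ => hpos _ (hgS i) x) (hsum x)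
      simpa [Finset.sum_apply] using this
    calc ∑ i ∈ F, ENNReal.ofReal (μ (g i))
        = ENNReal.ofReal (μ (∑ i ∈ F', g i)) := by rw [hμh, ← h2, h1]
      _ ≤ _ := le_iSup (fun t : {g : X → ℝ // g ∈ S ∧ ∀ x, g x ≤ f x} => ENNReal.ofReal (μ t.1)) ⟨_, hhS, hle⟩
  · apply iSup_le
    rintro ⟨g, hgS, hle⟩
    set r : X → ℝ := fun x => max (f x - g x) 0 with hrdef
    have hrS : r ∈ S := htrunc f hf g hgS
    set G : Bool → X → ℝ := fun b => if b then g else r with hGdef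
    have hmem : (∑' b, ENNReal.ofReal (μ (G b))) ∈
        { s : ℝ≥0∞ | ∃ (ι : Type) (_ : Countable ι) (g : ι → X → ℝ),
          (∀ i, g i ∈ S) ∧ (∀ x, HasSum (fun i => g i x) (f x)) ∧
          s = ∑' i, ENNReal.ofReal (μ (g i)) } := by
      refine ⟨Bool, inferInstance, G, ?_, ?_, rfl⟩
      · intro b; cases b <;> simp [hGdef, hgS, hrS]
      · intro x
        have h := hasSum_fintype (fun b => G b x)
        have : ∑ b, G b x = f x := by
          rw [Fintype.sum_bool]
          have hGt : G true = g := by simp [hGdef]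
          have hGf : G false = r := by simp [hGdef]
          rw [hGt, hGf, hrdef]
          simp only [max_eq_left (sub_nonneg.2 (hle x))]
          ring
        rwa [this] at h
    have : ENNReal.ofReal (μ g) ≤ ∑' b, ENNReal.ofReal (μ (G b)) := by
      rw [tsum_bool]
      have hGt : G true = g := by simp [hGdef]
      rw [hGt]
      exact le_add_self
    exact this.trans (le_sSup hmem)

end core

section ereal_helpers

lemma ereal_coe_iSup {ι : Sort*} [Nonempty ι] (f : ι → ℝ≥0∞) :
    ((⨆ i, f i : ℝ≥0∞) : EReal) = ⨆ i, (f i : EReal) := by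
  apply le_antisymm
  · apply le_of_forall_lt
    intro c hc
    induction c with
    | bot =>
      obtain ⟨i⟩ := ‹Nonempty ι›
      exact (EReal.bot_lt_coe_ennreal (f i)).trans_le (le_iSup (fun i => ((f i : EReal))) i)
    | top => exact absurd (hc.trans_le le_top) (lt_irrefl _)
    | coe r =>
      rcases lt_or_ge r 0 with hr | hr
      · obtain ⟨i⟩ := ‹Nonempty ι›
        have h1 : (r : EReal) < 0 := by exact_mod_cast hr
        exact h1.trans_le ((EReal.coe_ennreal_nonneg (f i)).trans
          (le_iSup (fun i => ((f i : EReal))) i))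
      · have hr' : ENNReal.ofReal r < ⨆ i, f i := by
          rw [← EReal.coe_ennreal_lt_coe_ennreal_iff, EReal.coe_ennreal_ofReal,
            max_eq_left hr]
          exact hc
        obtain ⟨i, hi⟩ := lt_iSup_iff.1 hr'
        calc (r : EReal) = ((ENNReal.ofReal r : ℝ≥0∞) : EReal) := by
              rw [EReal.coe_ennreal_ofReal, max_eq_left hr]
          _ < ((f i : ℝ≥0∞) : EReal) := EReal.coe_ennreal_lt_coe_ennreal_iff.2 hi
          _ ≤ _ := le_iSup (fun i => ((f i : EReal))) i
  · exact iSup_le fun i => EReal.coe_ennreal_le_coe_ennreal_iff.2 (le_iSup f i)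

end ereal_helpers

lemma ereal_neg_iInf {ι : Sort*} (f : ι → EReal) : -(⨅ i, f i) = ⨆ i, -(f i) := by
  apply le_antisymm
  · rw [EReal.neg_le]
    exact le_iInf fun i => EReal.neg_le_of_neg_le (le_iSup (fun i => -(f i)) i)
  · exact iSup_le fun i => EReal.neg_le_neg_iff.2 (iInf_le f i)

section part1
variable {X : Type*} {S : Set (X → ℝ)} {μ : (X → ℝ) → ℝ} {f : X → ℝ}

lemma posVar_EReal (hpos : ∀ f ∈ S, ∀ x, 0 ≤ f x)
    (hadd : ∀ f ∈ S, ∀ g ∈ S, f + g ∈ S)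
    (htrunc : ∀ f ∈ S, ∀ g ∈ S, (fun x => max (f x - g x) 0) ∈ S)
    (h0 : (0 : X → ℝ) ∈ S) (hμ0 : μ 0 = 0)
    (hμadd : ∀ a ∈ S, ∀ b ∈ S, μ (a + b) = μ a + μ b)
    (hf : f ∈ S) :
    ((posVarD S μ f : ℝ≥0∞) : EReal)
      = ⨆ (g : X → ℝ) (_ : g ∈ S) (_ : ∀ x, g x ≤ f x), (μ g : EReal) := by
  have hTne : Nonempty {g : X → ℝ // g ∈ S ∧ ∀ x, g x ≤ f x} :=
    ⟨⟨f, hf, fun x => le_rfl⟩⟩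
  rw [posVar_eq hpos hadd htrunc h0 hμ0 hμadd hf, ereal_coe_iSup]
  apply le_antisymm
  · apply iSup_le
    rintro ⟨g, hgS, hle⟩
    rw [EReal.coe_ennreal_ofReal]
    have hg' : (μ g : EReal) ≤ ⨆ (g : X → ℝ) (_ : g ∈ S) (_ : ∀ x, g x ≤ f x), (μ g : EReal) :=
      le_iSup_of_le g (le_iSup_of_le hgS (le_iSup_of_le hle le_rfl))
    have h0' : (0 : EReal) ≤ ⨆ (g : X → ℝ) (_ : g ∈ S) (_ : ∀ x, g x ≤ f x), (μ g : EReal) := by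
      have : ((μ (0 : X → ℝ) : ℝ) : EReal) = 0 := by rw [hμ0]; exact EReal.coe_zero
      rw [← this]
      exact le_iSup_of_le 0 (le_iSup_of_le h0
        (le_iSup_of_le (fun x => hpos f hf x) le_rfl))
    exact max_le hg' h0'
  · apply iSup_le; intro g
    apply iSup_le; intro hgS
    apply iSup_le; intro hle
    calc (μ g : EReal) ≤ max (μ g : EReal) 0 := le_max_left _ _
      _ = ((ENNReal.ofReal (μ g) : ℝ≥0∞) : EReal) := (EReal.coe_ennreal_ofReal).symm
      _ ≤ _ := le_iSup (fun t : {g : X → ℝ // g ∈ S ∧ ∀ x, g x ≤ f x} =>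
            ((ENNReal.ofReal (μ t.1) : ℝ≥0∞) : EReal)) ⟨g, hgS, hle⟩
end part1

section more
variable {X : Type*} {S : Set (X → ℝ)} {μ : (X → ℝ) → ℝ} {f : X → ℝ}

lemma negVar_eq_posVar : negVarD S μ f = posVarD S (fun g => -μ g) f := rfl

lemma posVar_eq_negVar : posVarD S μ f = negVarD S (fun g => -μ g) f := by
  unfold posVarD negVarD
  simp only [neg_neg]

lemma ofReal_abs_eq (x : ℝ) :
    ENNReal.ofReal |x| = ENNReal.ofReal x + ENNReal.ofReal (-x) := by
  rcases le_total 0 x with h | h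
  · rw [abs_of_nonneg h, ENNReal.ofReal_eq_zero.2 (by linarith : -x ≤ 0), add_zero]
  · rw [abs_of_nonpos h, ENNReal.ofReal_eq_zero.2 h, zero_add]

/-- single element bound: for `u ∈ S`, `u ≤ f`, `ofReal |μ u| ≤ totVarD`. -/
lemma single_le_tot
    (htrunc : ∀ f ∈ S, ∀ g ∈ S, (fun x => max (f x - g x) 0) ∈ S)
    (hf : f ∈ S) {u : X → ℝ} (hu : u ∈ S) (hule : ∀ x, u x ≤ f x) :
    ENNReal.ofReal |μ u| ≤ totVarD S μ f := by
  set r : X → ℝ := fun x => max (f x - u x) 0 with hrdef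
  have hrS : r ∈ S := htrunc f hf u hu
  set G : Bool → X → ℝ := fun b => if b then u else r with hGdef
  have hmem : (∑' b, ENNReal.ofReal |μ (G b)|) ∈
      { s : ℝ≥0∞ | ∃ (ι : Type) (_ : Countable ι) (g : ι → X → ℝ),
        (∀ i, g i ∈ S) ∧ (∀ x, HasSum (fun i => g i x) (f x)) ∧
        s = ∑' i, ENNReal.ofReal |μ (g i)| } := by
    refine ⟨Bool, inferInstance, G, ?_, ?_, rfl⟩
    · intro b; cases b <;> simp [hGdef, hu, hrS]
    · intro x
      have h := hasSum_fintype (fun b => G b x)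
      have he : ∑ b, G b x = f x := by
        rw [Fintype.sum_bool]
        have hGt : G true = u := by simp [hGdef]
        have hGf : G false = r := by simp [hGdef]
        rw [hGt, hGf, hrdef]
        simp only [max_eq_left (sub_nonneg.2 (hule x))]
        ring
      rwa [he] at h
  have : ENNReal.ofReal |μ u| ≤ ∑' b, ENNReal.ofReal |μ (G b)| := by
    rw [tsum_bool]
    have hGt : G true = u := by simp [hGdef]
    rw [hGt]
    exact le_add_self
  exact this.trans (le_sSup hmem)

lemma pair_le_tot (hpos : ∀ f ∈ S, ∀ x, 0 ≤ f x)
    (hmax : ∀ f ∈ S, ∀ g ∈ S, (fun x => max (f x) (g x)) ∈ S)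
    (hmin : ∀ f ∈ S, ∀ g ∈ S, (fun x => min (f x) (g x)) ∈ S)
    (htrunc : ∀ f ∈ S, ∀ g ∈ S, (fun x => max (f x - g x) 0) ∈ S)
    (hμadd : ∀ a ∈ S, ∀ b ∈ S, μ (a + b) = μ a + μ b)
    (hf : f ∈ S) {g h : X → ℝ} (hg : g ∈ S) (hgle : ∀ x, g x ≤ f x)
    (hh : h ∈ S) (hhle : ∀ x, h x ≤ f x) :
    ENNReal.ofReal (μ g) + ENNReal.ofReal (-μ h) ≤ totVarD S μ f := by
  rcases le_or_gt (μ g) 0 with hsg | hsg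
  · rw [ENNReal.ofReal_eq_zero.2 hsg, zero_add]
    exact le_trans (ENNReal.ofReal_le_ofReal (neg_le_abs _)) (single_le_tot htrunc hf hh hhle)
  rcases le_or_gt (-μ h) 0 with hsh | hsh
  · rw [ENNReal.ofReal_eq_zero.2 hsh, add_zero]
    exact le_trans (ENNReal.ofReal_le_ofReal (le_abs_self _)) (single_le_tot htrunc hf hg hgle)
  -- main case
  set p : X → ℝ := fun x => max (g x - h x) 0 with hpdef
  set q : X → ℝ := fun x => max (h x - g x) 0 with hqdef
  set m : X → ℝ := fun x => min (g x) (h x) with hmdef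
  set M : X → ℝ := fun x => max (g x) (h x) with hMdef
  set r : X → ℝ := fun x => max (f x - M x) 0 with hrdef
  have hpS : p ∈ S := htrunc g hg h hh
  have hqS : q ∈ S := htrunc h hh g hg
  have hmS : m ∈ S := hmin g hg h hh
  have hMS : M ∈ S := hmax g hg h hh
  have hrS : r ∈ S := htrunc f hf M hMS
  have hMle : ∀ x, M x ≤ f x := fun x => max_le (hgle x) (hhle x)
  have hr : ∀ x, r x = f x - M x := fun x => max_eq_left (sub_nonneg.2 (hMle x))
  have hgsplit : g = p + m := by
    funext x
    simp only [Pi.add_apply, hpdef, hmdef]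
    rcases le_total (g x) (h x) with hx | hx
    · rw [max_eq_right (by linarith), min_eq_left hx]; ring
    · rw [max_eq_left (by linarith), min_eq_right hx]; ring
  have hhsplit : h = q + m := by
    funext x
    simp only [Pi.add_apply, hqdef, hmdef]
    rcases le_total (g x) (h x) with hx | hx
    · rw [max_eq_left (by linarith), min_eq_left hx]; ring
    · rw [max_eq_right (by linarith), min_eq_right hx]; ring
  have hμg : μ g = μ p + μ m := by rw [hgsplit, hμadd p hpS m hmS]
  have hμh : μ h = μ q + μ m := by rw [hhsplit, hμadd q hqS m hmS]
  -- the four-element decomposition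
  set K : Fin 4 → X → ℝ := ![p, q, m, r] with hKdef
  have hKS : ∀ i, K i ∈ S := by
    intro i
    fin_cases i <;> simpa [hKdef] using ‹_›
  have hKsum : ∀ x, HasSum (fun i => K i x) (f x) := by
    intro x
    have h1 := hasSum_fintype (fun i => K i x)
    have he : ∑ i, K i x = f x := by
      rw [Fin.sum_univ_four]
      have : K 0 x = p x ∧ K 1 x = q x ∧ K 2 x = m x ∧ K 3 x = r x := by
        refine ⟨rfl, rfl, rfl, rfl⟩
      obtain ⟨e0, e1, e2, e3⟩ := this
      rw [e0, e1, e2, e3, hr x]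
      simp only [hpdef, hqdef, hmdef, hMdef]
      rcases le_total (g x) (h x) with hx | hx
      · rw [max_eq_right (by linarith), max_eq_left (by linarith), min_eq_left hx,
          max_eq_right hx]
        ring
      · rw [max_eq_left (by linarith), max_eq_right (by linarith), min_eq_right hx,
          max_eq_left hx]
        ring
    rwa [he] at h1
  have hmem : (∑' i, ENNReal.ofReal |μ (K i)|) ∈
      { s : ℝ≥0∞ | ∃ (ι : Type) (_ : Countable ι) (g : ι → X → ℝ),
        (∀ i, g i ∈ S) ∧ (∀ x, HasSum (fun i => g i x) (f x)) ∧
        s = ∑' i, ENNReal.ofReal |μ (g i)| } :=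
    ⟨Fin 4, inferInstance, K, hKS, hKsum, rfl⟩
  have hstep : ENNReal.ofReal (μ g) + ENNReal.ofReal (-μ h)
      ≤ ∑' i, ENNReal.ofReal |μ (K i)| := by
    rw [← ENNReal.ofReal_add (le_of_lt hsg) (le_of_lt hsh)]
    have h1 : μ g + -μ h = μ p - μ q := by rw [hμg, hμh]; ring
    rw [h1]
    have h2 : μ p - μ q ≤ |μ p| + |μ q| := by
      have := le_abs_self (μ p)
      have := neg_le_abs (μ q)
      linarith [le_abs_self (μ p), neg_abs_le (μ q)]
    calc ENNReal.ofReal (μ p - μ q) ≤ ENNReal.ofReal (|μ p| + |μ q|) :=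
          ENNReal.ofReal_le_ofReal h2
      _ = ENNReal.ofReal |μ p| + ENNReal.ofReal |μ q| :=
          ENNReal.ofReal_add (abs_nonneg _) (abs_nonneg _)
      _ ≤ (ENNReal.ofReal |μ p| + ENNReal.ofReal |μ q| + ENNReal.ofReal |μ m|)
            + ENNReal.ofReal |μ r| := le_add_right (le_add_right le_rfl)
      _ = ∑' i, ENNReal.ofReal |μ (K i)| := by
          rw [tsum_fintype, Fin.sum_univ_four]
          rfl
  exact hstep.trans (le_sSup hmem)

end more

section parts
variable {X : Type*} {S : Set (X → ℝ)} {μ : (X → ℝ) → ℝ} {f : X → ℝ}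

lemma tot_eq (hpos : ∀ f ∈ S, ∀ x, 0 ≤ f x)
    (hadd : ∀ f ∈ S, ∀ g ∈ S, f + g ∈ S)
    (hmax : ∀ f ∈ S, ∀ g ∈ S, (fun x => max (f x) (g x)) ∈ S)
    (hmin : ∀ f ∈ S, ∀ g ∈ S, (fun x => min (f x) (g x)) ∈ S)
    (htrunc : ∀ f ∈ S, ∀ g ∈ S, (fun x => max (f x - g x) 0) ∈ S)
    (h0 : (0 : X → ℝ) ∈ S) (hμ0 : μ 0 = 0)
    (hμadd : ∀ a ∈ S, ∀ b ∈ S, μ (a + b) = μ a + μ b)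
    (hf : f ∈ S) :
    totVarD S μ f = posVarD S μ f + negVarD S μ f := by
  apply le_antisymm
  · apply sSup_le
    rintro s ⟨ι, hc, g, hgS, hsum, rfl⟩
    calc ∑' i, ENNReal.ofReal |μ (g i)|
        = ∑' i, (ENNReal.ofReal (μ (g i)) + ENNReal.ofReal (-μ (g i))) :=
          tsum_congr fun i => ofReal_abs_eq _
      _ = (∑' i, ENNReal.ofReal (μ (g i))) + ∑' i, ENNReal.ofReal (-μ (g i)) :=
          ENNReal.tsum_add
      _ ≤ posVarD S μ f + negVarD S μ f :=
          add_le_add (le_sSup ⟨ι, hc, g, hgS, hsum, rfl⟩)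
            (le_sSup ⟨ι, hc, g, hgS, hsum, rfl⟩)
  · have hμ'0 : (fun g => -μ g) 0 = 0 := by simp [hμ0]
    have hμ'add : ∀ a ∈ S, ∀ b ∈ S, (fun g => -μ g) (a + b)
        = (fun g => -μ g) a + (fun g => -μ g) b := by
      intro a ha b hb; simp [hμadd a ha b hb]; ring
    rw [posVar_eq hpos hadd htrunc h0 hμ0 hμadd hf,
      negVar_eq_posVar, posVar_eq hpos hadd htrunc h0 hμ'0 hμ'add hf]
    have hTne : Nonempty {g : X → ℝ // g ∈ S ∧ ∀ x, g x ≤ f x} :=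
      ⟨⟨f, hf, fun x => le_rfl⟩⟩
    apply ENNReal.iSup_add_iSup_le
    rintro ⟨g, hgS, hgle⟩ ⟨h, hhS, hhle⟩
    exact pair_le_tot hpos hmax hmin htrunc hμadd hf hgS hgle hhS hhle

lemma pos_le_neg (hpos : ∀ f ∈ S, ∀ x, 0 ≤ f x)
    (hadd : ∀ f ∈ S, ∀ g ∈ S, f + g ∈ S)
    (htrunc : ∀ f ∈ S, ∀ g ∈ S, (fun x => max (f x - g x) 0) ∈ S)
    (h0 : (0 : X → ℝ) ∈ S) (hμ0 : μ 0 = 0)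
    (hμadd : ∀ a ∈ S, ∀ b ∈ S, μ (a + b) = μ a + μ b)
    (hf : f ∈ S) :
    posVarD S μ f ≤ ENNReal.ofReal (μ f) + negVarD S μ f := by
  rw [posVar_eq hpos hadd htrunc h0 hμ0 hμadd hf]
  apply iSup_le
  rintro ⟨g, hgS, hgle⟩
  set g' : X → ℝ := fun x => max (f x - g x) 0 with hg'def
  have hg'S : g' ∈ S := htrunc f hf g hgS
  have hg'le : ∀ x, g' x ≤ f x := by
    intro x
    simp only [hg'def]
    have := hpos g hgS x
    have := hpos f hf x
    rcases le_total (f x - g x) 0 with hx | hx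
    · rw [max_eq_right hx]; linarith
    · rw [max_eq_left hx]; linarith
  have hsplit : f = g + g' := by
    funext x
    simp only [Pi.add_apply, hg'def, max_eq_left (sub_nonneg.2 (hgle x))]
    ring
  have hμf : μ f = μ g + μ g' := by
    conv_lhs => rw [hsplit]
    exact hμadd g hgS g' hg'S
  have h1 : μ g = μ f + -μ g' := by rw [hμf]; ring
  calc ENNReal.ofReal (μ g) ≤ ENNReal.ofReal (μ f) + ENNReal.ofReal (-μ g') := by
        rw [h1]; exact ENNReal.ofReal_add_le
    _ ≤ ENNReal.ofReal (μ f) + negVarD S μ f := by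
        apply add_le_add le_rfl
        have hμ'0 : (fun g => -μ g) 0 = 0 := by simp [hμ0]
        have hμ'add : ∀ a ∈ S, ∀ b ∈ S, (fun g => -μ g) (a + b)
            = (fun g => -μ g) a + (fun g => -μ g) b := by
          intro a ha b hb; simp [hμadd a ha b hb]; ring
        rw [negVar_eq_posVar, posVar_eq hpos hadd htrunc h0 hμ'0 hμ'add hf]
        exact le_iSup (fun t : {g : X → ℝ // g ∈ S ∧ ∀ x, g x ≤ f x} =>
          ENNReal.ofReal (-μ t.1)) ⟨g', hg'S, hg'le⟩

end parts

section part5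
variable {X : Type*} {S : Set (X → ℝ)} {μ : (X → ℝ) → ℝ} {f : X → ℝ}

lemma posVar_toReal_le (hpos : ∀ f ∈ S, ∀ x, 0 ≤ f x)
    (hadd : ∀ f ∈ S, ∀ g ∈ S, f + g ∈ S)
    (htrunc : ∀ f ∈ S, ∀ g ∈ S, (fun x => max (f x - g x) 0) ∈ S)
    (h0 : (0 : X → ℝ) ∈ S) (hμ0 : μ 0 = 0)
    (hμadd : ∀ a ∈ S, ∀ b ∈ S, μ (a + b) = μ a + μ b)
    (hf : f ∈ S) (hnt : negVarD S μ f ≠ ⊤) :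
    (posVarD S μ f).toReal ≤ μ f + (negVarD S μ f).toReal := by
  have hμ'0 : (fun g => -μ g) 0 = 0 := by simp [hμ0]
  have hμ'add : ∀ a ∈ S, ∀ b ∈ S, (fun g => -μ g) (a + b)
      = (fun g => -μ g) a + (fun g => -μ g) b := by
    intro a ha b hb; simp [hμadd a ha b hb]; ring
  have hnegiSup : negVarD S μ f
      = ⨆ t : {g : X → ℝ // g ∈ S ∧ ∀ x, g x ≤ f x}, ENNReal.ofReal (-μ t.1) := by
    rw [negVar_eq_posVar, posVar_eq hpos hadd htrunc h0 hμ'0 hμ'add hf]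
  have hnegf : -μ f ≤ (negVarD S μ f).toReal := by
    have h1 : ENNReal.ofReal (-μ f) ≤ negVarD S μ f := by
      rw [hnegiSup]
      exact le_iSup (fun t : {g : X → ℝ // g ∈ S ∧ ∀ x, g x ≤ f x} =>
        ENNReal.ofReal (-μ t.1)) ⟨f, hf, fun x => le_rfl⟩
    exact (ENNReal.ofReal_le_iff_le_toReal hnt).1 h1
  have hc : 0 ≤ μ f + (negVarD S μ f).toReal := by linarith
  have key : posVarD S μ f ≤ ENNReal.ofReal (μ f + (negVarD S μ f).toReal) := by
    rw [posVar_eq hpos hadd htrunc h0 hμ0 hμadd hf]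
    apply iSup_le
    rintro ⟨g, hgS, hgle⟩
    apply ENNReal.ofReal_le_ofReal
    -- μ g ≤ μ f + neg.toReal
    set g' : X → ℝ := fun x => max (f x - g x) 0 with hg'def
    have hg'S : g' ∈ S := htrunc f hf g hgS
    have hg'le : ∀ x, g' x ≤ f x := by
      intro x
      simp only [hg'def]
      have := hpos g hgS x
      have := hpos f hf x
      rcases le_total (f x - g x) 0 with hx | hx
      · rw [max_eq_right hx]; linarith
      · rw [max_eq_left hx]; linarith
    have hsplit : f = g + g' := by
      funext x
      simp only [Pi.add_apply, hg'def, max_eq_left (sub_nonneg.2 (hgle x))]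
      ring
    have hμf : μ f = μ g + μ g' := by
      conv_lhs => rw [hsplit]
      exact hμadd g hgS g' hg'S
    have h2 : -μ g' ≤ (negVarD S μ f).toReal := by
      rcases le_total (-μ g') 0 with hx | hx
      · exact hx.trans ENNReal.toReal_nonneg
      · have h1 : ENNReal.ofReal (-μ g') ≤ negVarD S μ f := by
          rw [hnegiSup]
          exact le_iSup (fun t : {g : X → ℝ // g ∈ S ∧ ∀ x, g x ≤ f x} =>
            ENNReal.ofReal (-μ t.1)) ⟨g', hg'S, hg'le⟩
        exact (ENNReal.ofReal_le_iff_le_toReal hnt).1 h1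
    linarith [hμf]
  calc (posVarD S μ f).toReal
      ≤ (ENNReal.ofReal (μ f + (negVarD S μ f).toReal)).toReal :=
        ENNReal.toReal_mono ENNReal.ofReal_ne_top key
    _ = μ f + (negVarD S μ f).toReal := ENNReal.toReal_ofReal hc

end part5

/-- Let `S` be a nonempty positive vector lattice of functions `X → [0, ∞)`
(closed under `f + g`, `max (f, g)`, `min (f, g)` and `max (f - g, 0)`) and `μ` a Daniell
functional on `S`. Then `|μ|⁺(f) = sup {μ g : g ∈ S, g ≤ f}`,
`|μ|⁻(f) = -inf {μ g : g ∈ S, g ≤ f}`, `|μ|(f) = |μ|⁺(f) + |μ|⁻(f)`; moreover `|μ|⁺(f)` is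
finite iff `|μ|⁻(f)` is, and in that case `μ f = |μ|⁺(f) - |μ|⁻(f)`. -/
theorem statement5 {X : Type*} (S : Set (X → ℝ)) (hne : S.Nonempty)
    (hpos : ∀ f ∈ S, ∀ x, 0 ≤ f x)
    (hadd : ∀ f ∈ S, ∀ g ∈ S, f + g ∈ S)
    (hmax : ∀ f ∈ S, ∀ g ∈ S, (fun x => max (f x) (g x)) ∈ S)
    (hmin : ∀ f ∈ S, ∀ g ∈ S, (fun x => min (f x) (g x)) ∈ S)
    (htrunc : ∀ f ∈ S, ∀ g ∈ S, (fun x => max (f x - g x) 0) ∈ S)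
    (μ : (X → ℝ) → ℝ)
    (hDaniell : ∀ f ∈ S, ∀ fn : ℕ → X → ℝ, (∀ n, fn n ∈ S) →
      (∀ x, Filter.Tendsto (fun N => ∑ n ∈ Finset.range N, fn n x)
        Filter.atTop (nhds (f x))) →
      Filter.Tendsto (fun N => ∑ n ∈ Finset.range N, μ (fn n))
        Filter.atTop (nhds (μ f)))
    (f : X → ℝ) (hf : f ∈ S) :
    ((posVarD S μ f : EReal) =
        ⨆ (g : X → ℝ) (_ : g ∈ S) (_ : ∀ x, g x ≤ f x), (μ g : EReal)) ∧
    ((negVarD S μ f : EReal) =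
        -(⨅ (g : X → ℝ) (_ : g ∈ S) (_ : ∀ x, g x ≤ f x), (μ g : EReal))) ∧
    totVarD S μ f = posVarD S μ f + negVarD S μ f ∧
    (posVarD S μ f ≠ ⊤ ↔ negVarD S μ f ≠ ⊤) ∧
    (posVarD S μ f ≠ ⊤ → negVarD S μ f ≠ ⊤ →
      μ f = (posVarD S μ f).toReal - (negVarD S μ f).toReal) := by
  have h0 : (0 : X → ℝ) ∈ S := zero_mem' hne htrunc
  have hμ0 : μ 0 = 0 := mu_zero' h0 hDaniell
  have hμadd : ∀ a ∈ S, ∀ b ∈ S, μ (a + b) = μ a + μ b :=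
    fun a ha b hb => mu_add' h0 hμ0 hDaniell hadd ha hb
  set μ' : (X → ℝ) → ℝ := fun g => -μ g with hμ'def
  have hμ'0 : μ' 0 = 0 := by simp [hμ'def, hμ0]
  have hμ'add : ∀ a ∈ S, ∀ b ∈ S, μ' (a + b) = μ' a + μ' b := by
    intro a ha b hb; simp [hμ'def, hμadd a ha b hb]; ring
  have hswap1 : negVarD S μ f = posVarD S μ' f := negVar_eq_posVar
  have hswap2 : posVarD S μ f = negVarD S μ' f := posVar_eq_negVar
  refine ⟨?_, ?_, ?_, ?_, ?_⟩
  · exact posVar_EReal hpos hadd htrunc h0 hμ0 hμadd hf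
  · rw [hswap1]
    rw [posVar_EReal hpos hadd htrunc h0 hμ'0 hμ'add hf]
    rw [ereal_neg_iInf]
    apply iSup_congr
    intro g
    rw [ereal_neg_iInf]
    apply iSup_congr
    intro hg
    rw [ereal_neg_iInf]
    apply iSup_congr
    intro hle
    exact (EReal.coe_neg (μ g)).symm
  · exact tot_eq hpos hadd hmax hmin htrunc h0 hμ0 hμadd hf
  · constructor
    · intro hpt hcon
      have h := pos_le_neg (μ := μ') hpos hadd htrunc h0 hμ'0 hμ'add hf
      rw [← hswap1, ← hswap2, hcon] at h
      have h2 : ENNReal.ofReal (μ' f) + posVarD S μ f = ⊤ := top_le_iff.1 h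
      rcases ENNReal.add_eq_top.1 h2 with h3 | h3
      · exact ENNReal.ofReal_ne_top h3
      · exact hpt h3
    · intro hnt hcon
      have h := pos_le_neg (μ := μ) hpos hadd htrunc h0 hμ0 hμadd hf
      rw [hcon] at h
      have h2 : ENNReal.ofReal (μ f) + negVarD S μ f = ⊤ := top_le_iff.1 h
      rcases ENNReal.add_eq_top.1 h2 with h3 | h3
      · exact ENNReal.ofReal_ne_top h3
      · exact hnt h3
  · intro hpt hnt
    have h1 := posVar_toReal_le hpos hadd htrunc h0 hμ0 hμadd hf hnt
    have h2 := posVar_toReal_le (μ := μ') hpos hadd htrunc h0 hμ'0 hμ'add hf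
      (by rw [← hswap2]; exact hpt)
    rw [← hswap1, ← hswap2] at h2
    have hμ'f : μ' f = -μ f := rfl
    rw [hμ'f] at h2
    linarith
end

section
/- Let 𝔖 be an interval system on X, V, W, Z complete Hausdorff commutative topological groups, L : V × W → Z biadditive and continuous in its second variable, and μ : 𝔖 → W a measure. Let A ∈ 𝔖, let A = ⋃_{λ∈Λ} A_λ be a countable pairwise disjoint decomposition with A_λ ∈ 𝔖, and let c ∈ V. Then for every neighborhood T of 0 in Z there exists a finite set Ξ ⊆ Λ such that svar(L, c, ⋃_{λ∈Λ\Ξ} A_λ, μ) ⊆ T. -/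
/-- The semivariation `svar(L, c, B, μ)`: the closure of the set of all sums
`∑ j, L c (μ (E j))` over finite pairwise disjoint families of members of `S`
contained in `B`. -/
def svarSet {X V W Z : Type*} [AddCommMonoid Z] [TopologicalSpace Z]
    (S : Set (Set X)) (L : V → W → Z) (μ : Set X → W) (c : V) (B : Set X) : Set Z :=
  closure { z : Z | ∃ (n : ℕ) (E : Fin n → Set X),
    (∀ j, E j ∈ S) ∧ (∀ j, E j ⊆ B) ∧ (Pairwise fun i j => Disjoint (E i) (E j)) ∧
    z = ∑ j, L c (μ (E j)) }

/-!
Put `ν E = L c (μ E)`; it is again σ-additive on `S`. Call a finite disjoint family *aligned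
outside `Ξ`* if each of its members lies in a single `B i` with `i ∉ Ξ`. Every finite disjoint
family inside `⋃_{i ∉ Ξ} B i` is a limit of aligned ones (cut each member along the `B i` and
decompose the pieces), so it suffices to find `Ξ` for which all aligned sums lie in a closed
neighbourhood of `0`. If no such `Ξ` existed, one could choose bad aligned families `F₀, F₁, …`
using pairwise disjoint finite blocks of indices. Completing them by decompositions of what remains
of each `B i` yields a single countable decomposition of `A`; σ-additivity on it makes `ν`
summable along the `F m`, so their sums tend to `0`, a contradiction.
-/

open Set Filter Topology Function

section Decomposition

variable {X : Type*} {S : Set (Set X)}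

structure IsDecomposition (S : Set (Set X)) (D : Set (Set X)) (G : Set X) : Prop where
  subset : D ⊆ S
  countable : D.Countable
  pairwiseDisjoint : D.PairwiseDisjoint id
  sUnion_eq : ⋃₀ D = G

namespace IsDecomposition

variable {D : Set (Set X)} {G : Set X}

theorem subset_of_mem (hD : IsDecomposition S D G) {d : Set X} (hd : d ∈ D) : d ⊆ G :=
  hD.sUnion_eq ▸ subset_sUnion_of_mem hd

theorem pairwise_disjoint (hD : IsDecomposition S D G) :
    Pairwise (Disjoint on fun d : D => (d : Set X)) :=
  fun d d' hne => hD.pairwiseDisjoint d.2 d'.2 (Subtype.coe_ne_coe.2 hne)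

theorem singleton (hG : G ∈ S) : IsDecomposition S {G} G :=
  ⟨singleton_subset_iff.2 hG, countable_singleton G, pairwiseDisjoint_singleton _ _,
    sUnion_singleton G⟩

theorem iUnion {κ : Type*} [Countable κ] {G : κ → Set X} (hG : Pairwise (Disjoint on G))
    {D : κ → Set (Set X)} (hD : ∀ k, IsDecomposition S (D k) (G k)) :
    IsDecomposition S (⋃ k, D k) (⋃ k, G k) := by
  refine ⟨iUnion_subset fun k => (hD k).subset, countable_iUnion fun k => (hD k).countable,
    ?_, by simp only [sUnion_iUnion, (hD _).sUnion_eq]⟩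
  intro d hd d' hd' hne
  obtain ⟨k, hk⟩ := mem_iUnion.1 hd
  obtain ⟨k', hk'⟩ := mem_iUnion.1 hd'
  rcases eq_or_ne k k' with rfl | hkk'
  · exact (hD k).pairwiseDisjoint hk hk' hne
  · exact (hG hkk').mono ((hD k).subset_of_mem hk) ((hD k').subset_of_mem hk')

end IsDecomposition

theorem pairwise_disjoint_sigma {ι : Type*} {κ : ι → Type*} {C : ι → Set X}
    {P : ∀ i, κ i → Set X} (hC : Pairwise (Disjoint on C))
    (hP : ∀ i, Pairwise (Disjoint on P i)) (hPC : ∀ i k, P i k ⊆ C i) :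
    Pairwise (Disjoint on fun p : Σ i, κ i => P p.1 p.2) := by
  rintro ⟨i, k⟩ ⟨i', k'⟩ hne
  rcases eq_or_ne i i' with rfl | hii'
  · exact hP i fun h => hne (congrArg (Sigma.mk i) h)
  · exact (hC hii').mono (hPC i k) (hPC i' k')

theorem pairwise_disjoint_sigma_of_isDecomposition {ι : Type*} {G : ι → Set X}
    (hG : Pairwise (Disjoint on G)) {D : ι → Set (Set X)}
    (hD : ∀ i, IsDecomposition S (D i) (G i)) :
    Pairwise (Disjoint on fun p : Σ i, D i => (p.2 : Set X)) :=
  pairwise_disjoint_sigma hG (fun i => (hD i).pairwise_disjoint)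
    fun i d => (hD i).subset_of_mem d.2

theorem iUnion_sigma_of_isDecomposition {ι : Type*} {G : ι → Set X} {D : ι → Set (Set X)}
    (hD : ∀ i, IsDecomposition S (D i) (G i)) :
    ⋃ p : Σ i, D i, (p.2 : Set X) = ⋃ i, G i := by
  simp only [iUnion_sigma, ← sUnion_eq_iUnion, (hD _).sUnion_eq]

namespace IsIntervalSystem

theorem exists_decomposition_sdiff (hS : IsIntervalSystem S) {A E : Set X} (hA : A ∈ S)
    (hE : E ∈ S) : ∃ D, IsDecomposition S D (A \ E) :=
  let ⟨D, h₁, h₂, h₃, h₄⟩ := (hS A hA E hE).1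
  ⟨D, h₁, h₂, h₃, h₄⟩

theorem exists_decomposition_inter (hS : IsIntervalSystem S) {A E : Set X} (hA : A ∈ S)
    (hE : E ∈ S) : ∃ D, IsDecomposition S D (A ∩ E) :=
  let ⟨D, h₁, h₂, h₃, h₄⟩ := (hS A hA E hE).2
  ⟨D, h₁, h₂, h₃, h₄⟩

theorem exists_decomposition_sdiff_of_isDecomposition (hS : IsIntervalSystem S)
    {D : Set (Set X)} {G E : Set X} (hD : IsDecomposition S D G) (hE : E ∈ S) :
    ∃ D', IsDecomposition S D' (G \ E) := by
  have : Countable D := hD.countable.to_subtype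
  choose D' hD' using fun d : D => hS.exists_decomposition_sdiff (hD.subset d.2) hE
  refine ⟨⋃ d, D' d, ?_⟩
  have hdisj : Pairwise (Disjoint on fun d : D => (d : Set X) \ E) :=
    fun d d' hne => (hD.pairwise_disjoint hne).mono sdiff_subset sdiff_subset
  rw [← hD.sUnion_eq, sUnion_eq_iUnion, iUnion_sdiff]
  exact IsDecomposition.iUnion hdisj hD'

theorem exists_decomposition_sdiff_biUnion (hS : IsIntervalSystem S) {κ : Type*} {G : Set X}
    (hG : G ∈ S) {s : Set κ} (hs : s.Finite) {P : κ → Set X} (hP : ∀ k ∈ s, P k ∈ S) :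
    ∃ D, IsDecomposition S D (G \ ⋃ k ∈ s, P k) := by
  induction s, hs using Set.Finite.induction_on with
  | empty => simpa using ⟨{G}, IsDecomposition.singleton hG⟩
  | @insert k s _ _ ih =>
    obtain ⟨D, hD⟩ := ih fun k' hk' => hP k' (mem_insert_of_mem k hk')
    rw [biUnion_insert, union_comm, ← sdiff_sdiff]
    exact hS.exists_decomposition_sdiff_of_isDecomposition hD (hP k (mem_insert k s))

end IsIntervalSystem

end Decomposition

namespace IsAddMeasure

variable {X W : Type*} [AddCommMonoid W] [TopologicalSpace W] {S : Set (Set X)}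
  {μ : Set X → W}

theorem hasSum (hμ : IsAddMeasure S μ) {κ : Type*} [Countable κ] {P : κ → Set X} {G : Set X}
    (hG : G ∈ S) (hP : ∀ k, P k ∈ S) (hPd : Pairwise (Disjoint on P)) (hPG : ⋃ k, P k = G) :
    HasSum (fun k => μ (P k)) (μ G) := by
  obtain ⟨f, hf⟩ := exists_injective_nat κ
  let e : κ ≃ range f := Equiv.ofInjective f hf
  have h := hμ (range f) (fun n => P (e.symm n)) G inferInstance hG (fun _ => hP _)
    (fun _ _ hne => hPd (e.symm.injective.ne hne)) ((e.symm.surjective.iUnion_comp P).trans hPG)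
  exact (e.symm.hasSum_iff (f := fun k => μ (P k))).1 h

theorem map {Z : Type*} [AddCommMonoid Z] [TopologicalSpace Z] (hμ : IsAddMeasure S μ)
    (g : W →+ Z) (hg : Continuous g) : IsAddMeasure S fun E => g (μ E) :=
  fun ι A B hι hB hA hd hAB => (hμ ι A B hι hB hA hd hAB).map g hg

theorem hasSum_sigma (hμ : IsAddMeasure S μ) {ι : Type*} [Countable ι] {C : ι → Set X}
    (hC : Pairwise (Disjoint on C)) {G : Set X} (hG : G ∈ S) (hGC : G ⊆ ⋃ i, C i)
    {D : ι → Set (Set X)} (hD : ∀ i, IsDecomposition S (D i) (G ∩ C i)) :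
    HasSum (fun p : Σ i, D i => μ p.2) (μ G) := by
  have : ∀ i, Countable (D i) := fun i => (hD i).countable.to_subtype
  refine hμ.hasSum hG (fun p => (hD p.1).subset p.2.2)
    (pairwise_disjoint_sigma_of_isDecomposition
      (fun i i' h => (hC h).mono inter_subset_right inter_subset_right) hD) ?_
  rw [iUnion_sigma_of_isDecomposition hD, ← inter_iUnion, inter_eq_left.2 hGC]

end IsAddMeasure

section AlignedSums

variable {X Z ι : Type*} {S : Set (Set X)} {ν : Set X → Z} {B : ι → Set X}

def alignedTailSums [AddCommMonoid Z] (S : Set (Set X)) (ν : Set X → Z) (B : ι → Set X)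
    (Ξ : Finset ι) : Set Z :=
  {z | ∃ (n : ℕ) (E : Fin n → Set X) (a : Fin n → ι), (∀ j, E j ∈ S) ∧
    Pairwise (Disjoint on E) ∧ (∀ j, a j ∉ Ξ ∧ E j ⊆ B (a j)) ∧ z = ∑ j, ν (E j)}

theorem sum_mem_alignedTailSums [AddCommMonoid Z] {Ξ : Finset ι} {κ : Type*} {P : κ → Set X}
    {a : κ → ι} (hP : ∀ k, P k ∈ S) (hPd : Pairwise (Disjoint on P)) (ha : ∀ k, a k ∉ Ξ)
    (hPa : ∀ k, P k ⊆ B (a k)) (t : Finset κ) :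
    ∑ k ∈ t, ν (P k) ∈ alignedTailSums S ν B Ξ := by
  let e := t.equivFin.symm
  refine ⟨t.card, fun j => P (e j), fun j => a (e j), fun _ => hP _,
    hPd.comp_of_injective (Subtype.val_injective.comp e.injective), fun _ => ⟨ha _, hPa _⟩, ?_⟩
  rw [← Finset.sum_coe_sort t]
  exact (e.sum_comp fun k : t => ν (P k)).symm

theorem sum_mem_closure_alignedTailSums [AddCommMonoid Z] [TopologicalSpace Z] [ContinuousAdd Z]
    [Countable ι] (hS : IsIntervalSystem S) (hν : IsAddMeasure S ν) (hB : ∀ i, B i ∈ S)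
    (hdisj : Pairwise (Disjoint on B)) (Ξ : Finset ι) {n : ℕ} {E : Fin n → Set X}
    (hE : ∀ j, E j ∈ S) (hEd : Pairwise (Disjoint on E))
    (hEΞ : ∀ j, E j ⊆ ⋃ (i : ι) (_ : i ∉ Ξ), B i) :
    ∑ j, ν (E j) ∈ closure (alignedTailSums S ν B Ξ) := by
  let C : {i // i ∉ Ξ} → Set X := fun i => B i
  have hC : Pairwise (Disjoint on C) := fun i i' hne => hdisj (Subtype.coe_ne_coe.2 hne)
  have hEC : ∀ j, E j ⊆ ⋃ i, C i := fun j => by rw [iUnion_subtype]; exact hEΞ j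
  choose D hD using fun j (i : {i // i ∉ Ξ}) => hS.exists_decomposition_inter (hE j) (hB i)
  have hsum : ∀ j, HasSum (fun p : Σ i, D j i => ν p.2) (ν (E j)) :=
    fun j => hν.hasSum_sigma hC (hE j) (hEC j) (hD j)
  have hlim : Tendsto (fun u : ∀ j, Finset (Σ i, D j i) => ∑ j, ∑ p ∈ u j, ν p.2)
      (Filter.pi fun _ => atTop) (𝓝 (∑ j, ν (E j))) :=
    tendsto_finsetSum _ fun j _ => (hsum j).comp (tendsto_eval_pi _ j)
  refine mem_closure_of_tendsto hlim (Eventually.of_forall fun u => ?_)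
  have hPd : Pairwise (Disjoint on fun q : Σ j, Σ i, D j i => (q.2.2 : Set X)) :=
    pairwise_disjoint_sigma hEd
      (fun j => pairwise_disjoint_sigma_of_isDecomposition
        (fun i i' h => (hC h).mono inter_subset_right inter_subset_right) (hD j))
      fun j p => ((hD j p.1).subset_of_mem p.2.2).trans inter_subset_left
  have h := sum_mem_alignedTailSums (ν := ν) (fun q => (hD q.1 q.2.1).subset q.2.2.2) hPd
    (fun q => q.2.1.2) (fun q => ((hD q.1 q.2.1).subset_of_mem q.2.2.2).trans inter_subset_right)
    (Finset.univ.sigma u)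
  rwa [Finset.sum_sigma] at h

variable [AddCommGroup Z] [UniformSpace Z] [IsUniformAddGroup Z] [CompleteSpace Z] [Countable ι]

theorem summable_of_finite_fibers (hS : IsIntervalSystem S) (hν : IsAddMeasure S ν)
    (hA : ⋃ i, B i ∈ S) (hB : ∀ i, B i ∈ S) (hdisj : Pairwise (Disjoint on B)) {κ : Type*}
    [Countable κ] {P : κ → Set X} {a : κ → ι} (hP : ∀ k, P k ∈ S)
    (hPd : Pairwise (Disjoint on P)) (hPa : ∀ k, P k ⊆ B (a k))
    (hfin : ∀ i, (a ⁻¹' {i}).Finite) : Summable fun k => ν (P k) := by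
  choose R hR using fun i =>
    hS.exists_decomposition_sdiff_biUnion (hB i) (hfin i) fun k _ => hP k
  have : ∀ i, Countable (R i) := fun i => (hR i).countable.to_subtype
  let Q : κ ⊕ (Σ i, R i) → Set X := Sum.elim P fun p => p.2
  have hcross : ∀ k (p : Σ i, R i), Disjoint (P k) p.2 := by
    rintro k ⟨i, d⟩
    refine Disjoint.mono_right ((hR i).subset_of_mem d.2) ?_
    by_cases hk : a k = i
    · exact disjoint_sdiff_right.mono_left (subset_biUnion_of_mem (u := P) hk)
    · exact (hdisj hk).mono (hPa k) sdiff_subset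
  have hQd : Pairwise (Disjoint on Q) := by
    rintro (k | p) (k' | p') hne
    · exact hPd fun h => hne (congrArg _ h)
    · exact hcross k p'
    · exact (hcross k' p).symm
    · exact pairwise_disjoint_sigma_of_isDecomposition
        (fun i i' h => (hdisj h).mono sdiff_subset sdiff_subset) hR fun h => hne (congrArg _ h)
  have hQ : ⋃ q, Q q = ⋃ i, B i := by
    rw [iUnion_sum]
    simp only [Q, Sum.elim_inl, Sum.elim_inr]
    rw [iUnion_sigma_of_isDecomposition hR]
    refine Subset.antisymm
      (union_subset (iUnion_mono' fun k => ⟨a k, hPa k⟩) (iUnion_mono fun i => sdiff_subset))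
      (iUnion_subset fun i x hx => ?_)
    by_cases h : x ∈ ⋃ k ∈ a ⁻¹' {i}, P k
    · obtain ⟨k, -, hk⟩ := mem_iUnion₂.1 h
      exact Or.inl (mem_iUnion.2 ⟨k, hk⟩)
    · exact Or.inr (mem_iUnion.2 ⟨i, hx, h⟩)
  have hsum := hν.hasSum hA (Sum.rec hP fun p => (hR p.1).subset p.2.2) hQd hQ
  exact hsum.summable.comp_injective Sum.inl_injective

theorem tendsto_sum_of_disjoint_blocks (hS : IsIntervalSystem S) (hν : IsAddMeasure S ν)
    (hA : ⋃ i, B i ∈ S) (hB : ∀ i, B i ∈ S) (hdisj : Pairwise (Disjoint on B))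
    {κ : ℕ → Type*} [∀ m, Fintype (κ m)] {F : ∀ m, κ m → Set X} {a : ∀ m, κ m → ι}
    (hF : ∀ m k, F m k ∈ S) (hFd : ∀ m, Pairwise (Disjoint on F m))
    (hFa : ∀ m k, F m k ⊆ B (a m k)) (hblock : ∀ m m' k k', a m k = a m' k' → m = m') :
    Tendsto (fun m => ∑ k, ν (F m k)) atTop (𝓝 0) := by
  let b : (Σ m, κ m) → ι := fun p => a p.1 p.2
  have hPd : Pairwise (Disjoint on fun p : Σ m, κ m => F p.1 p.2) := by
    rintro ⟨m, k⟩ ⟨m', k'⟩ hne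
    rcases eq_or_ne m m' with rfl | hmm'
    · exact hFd m fun h => hne (congrArg (Sigma.mk m) h)
    · exact (hdisj fun h => hmm' (hblock _ _ _ _ h)).mono (hFa m k) (hFa m' k')
  have hfin : ∀ i, (b ⁻¹' {i}).Finite := by
    intro i
    rcases (b ⁻¹' {i}).eq_empty_or_nonempty with h | ⟨⟨m, k⟩, hk⟩
    · exact h ▸ finite_empty
    · refine (finite_range (Sigma.mk m)).subset ?_
      rintro ⟨m', k'⟩ hk'
      obtain rfl := hblock _ _ _ _ (hk'.trans hk.symm)
      exact mem_range_self k'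
  have hsum := summable_of_finite_fibers hS hν hA hB hdisj (fun p => hF p.1 p.2) hPd
    (fun p => hFa p.1 p.2) hfin
  simpa only [tsum_fintype] using hsum.sigma.tendsto_atTop_zero

theorem exists_alignedTailSums_subset (hS : IsIntervalSystem S) (hν : IsAddMeasure S ν)
    (hA : ⋃ i, B i ∈ S) (hB : ∀ i, B i ∈ S) (hdisj : Pairwise (Disjoint on B)) {U : Set Z}
    (hU : U ∈ 𝓝 0) : ∃ Ξ, alignedTailSums S ν B Ξ ⊆ U := by
  classical
  by_contra! hbad
  choose z hz hzU using fun Ξ => not_subset.1 (hbad Ξ)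
  choose n F a hF hFd haF hzF using hz
  let Ξs : ℕ → Finset ι := fun m => Nat.rec ∅ (fun _ Ξ => Ξ ∪ Finset.univ.image (a Ξ)) m
  have hmono : Monotone Ξs := monotone_nat_of_le_succ fun _ => Finset.subset_union_left
  have hmem_succ : ∀ m j, a (Ξs m) j ∈ Ξs (m + 1) :=
    fun m j => Finset.mem_union_right _ (Finset.mem_image_of_mem _ (Finset.mem_univ j))
  have hne : ∀ m m' j j', m < m' → a (Ξs m) j ≠ a (Ξs m') j' :=
    fun m m' j j' hlt h => (haF _ j').1 (h ▸ hmono hlt (hmem_succ m j))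
  have hblock : ∀ m m' j j', a (Ξs m) j = a (Ξs m') j' → m = m' := by
    intro m m' j j' h
    rcases lt_trichotomy m m' with hlt | rfl | hlt
    · exact absurd h (hne _ _ _ _ hlt)
    · rfl
    · exact absurd h.symm (hne _ _ _ _ hlt)
  obtain ⟨m, hm⟩ := ((tendsto_sum_of_disjoint_blocks hS hν hA hB hdisj (fun m => hF (Ξs m))
    (fun m => hFd (Ξs m)) (fun m j => (haF _ j).2) hblock).eventually hU).exists
  exact hzU _ (hzF (Ξs m) ▸ hm)

end AlignedSums

theorem svarSet_subset_closure_alignedTailSums {X V W Z ι : Type*} [AddCommMonoid Z]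
    [TopologicalSpace Z] [ContinuousAdd Z] [Countable ι] {S : Set (Set X)}
    (hS : IsIntervalSystem S) {L : V → W → Z} {μ : Set X → W} {c : V}
    (hν : IsAddMeasure S fun E => L c (μ E)) {B : ι → Set X} (hB : ∀ i, B i ∈ S)
    (hdisj : Pairwise (Disjoint on B)) (Ξ : Finset ι) :
    svarSet S L μ c (⋃ (i : ι) (_ : i ∉ Ξ), B i) ⊆
      closure (alignedTailSums S (fun E => L c (μ E)) B Ξ) :=
  closure_minimal (fun _ ⟨_, _, hE, hEΞ, hEd, hz⟩ =>
    hz ▸ sum_mem_closure_alignedTailSums hS hν hB hdisj Ξ hE hEd hEΞ) isClosed_closure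

theorem statement7_general {X V W Z : Type*}
    [AddCommGroup W] [UniformSpace W]
    [AddCommGroup Z] [UniformSpace Z] [IsUniformAddGroup Z] [CompleteSpace Z]
    (S : Set (Set X)) (hS : IsIntervalSystem S)
    (L : V → W → Z)
    (hL2 : ∀ v w₁ w₂, L v (w₁ + w₂) = L v w₁ + L v w₂)
    (hLc : ∀ v, Continuous fun w => L v w)
    (μ : Set X → W) (hμ : IsAddMeasure S μ)
    (A : Set X) (hA : A ∈ S) (ι : Type*) [Countable ι]
    (B : ι → Set X) (hB : ∀ i, B i ∈ S)
    (hdisj : Pairwise fun i j => Disjoint (B i) (B j))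
    (hunion : (⋃ i, B i) = A) (c : V) :
    ∀ T ∈ nhds (0 : Z), ∃ Ξ : Finset ι,
      svarSet S L μ c (⋃ (i : ι) (_ : i ∉ Ξ), B i) ⊆ T := by
  have hν : IsAddMeasure S fun E => L c (μ E) := hμ.map (AddMonoidHom.mk' (L c) (hL2 c)) (hLc c)
  intro T hT
  obtain ⟨T₀, hT₀, hT₀closed, hT₀T⟩ := exists_mem_nhds_isClosed_subset hT
  obtain ⟨Ξ, hΞ⟩ := exists_alignedTailSums_subset hS hν (hunion ▸ hA) hB hdisj hT₀
  exact ⟨Ξ, (svarSet_subset_closure_alignedTailSums hS hν hB hdisj Ξ).trans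
    ((closure_minimal hΞ hT₀closed).trans hT₀T)⟩

/-- Let `A ∈ S` be decomposed as a countable pairwise disjoint union
`A = ⋃ i, B i` of members of `S`, and let `c ∈ V`. Then for every neighborhood `T` of `0`
in `Z` there is a finite set `Ξ` of indices such that
`svar(L, c, ⋃_{i ∉ Ξ} B i, μ) ⊆ T`. -/
theorem statement7 {X V W Z : Type*}
    [AddCommGroup V] [UniformSpace V] [IsUniformAddGroup V] [CompleteSpace V] [T2Space V]
    [AddCommGroup W] [UniformSpace W] [IsUniformAddGroup W] [CompleteSpace W] [T2Space W]
    [AddCommGroup Z] [UniformSpace Z] [IsUniformAddGroup Z] [CompleteSpace Z] [T2Space Z]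
    (S : Set (Set X)) (hS : IsIntervalSystem S)
    (L : V → W → Z)
    (hL1 : ∀ v₁ v₂ w, L (v₁ + v₂) w = L v₁ w + L v₂ w)
    (hL2 : ∀ v w₁ w₂, L v (w₁ + w₂) = L v w₁ + L v w₂)
    (hLc : ∀ v, Continuous fun w => L v w)
    (μ : Set X → W) (hμ : IsAddMeasure S μ)
    (A : Set X) (hA : A ∈ S) (ι : Type*) [Countable ι]
    (B : ι → Set X) (hB : ∀ i, B i ∈ S)
    (hdisj : Pairwise fun i j => Disjoint (B i) (B j))
    (hunion : (⋃ i, B i) = A) (c : V) :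
    ∀ T ∈ nhds (0 : Z), ∃ Ξ : Finset ι,
      svarSet S L μ c (⋃ (i : ι) (_ : i ∉ Ξ), B i) ⊆ T :=
  statement7_general S hS L hL2 hLc μ hμ A hA ι B hB hdisj hunion c
end
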